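/- arXiv:2212.04719 — 12 statements merged into one kernel-verified Lean document; each statement's English description precedes it below -/
import Mathlib

section
/- Let n = 2m+1 for a positive integer m, and let d = 2^(m+1)+3. Then the power function F(x) = x^d over the finite field F_{2^n} is 0-APN; that is, the equation (x+1)^d + x^d + 1 = 0 has no solution x in F_{2^n} \ {0,1}. -/
/-!
In characteristic 2 the polynomial factors as `(x ^ 2 ^ (m + 1) + x) * (x ^ 2 + x + 1)`.
With `n = 2m + 1`, a root of the first factor is fixed by the Frobenius powers
`2 ^ (m + 1)` and `2 ^ n`, hence by `2 ^ gcd(m + 1, n) = 2`; a root of the second is a cube root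
of unity, and `2 ^ n ≡ 2 [MOD 3]` makes it fixed by squaring as well. Either way `x ^ 2 = x`.
-/

theorem add_one_pow_two_pow_add_three_add_pow_add_one {R : Type*} [CommRing R] [CharP R 2]
    (x : R) (k : ℕ) :
    (x + 1) ^ (2 ^ k + 3) + x ^ (2 ^ k + 3) + 1 = (x ^ 2 ^ k + x) * (x ^ 2 + x + 1) := by
  rw [pow_add, pow_add, add_pow_char_pow, one_pow]
  linear_combination (x ^ 2 ^ k * x ^ 3 + x ^ 2 ^ k * x ^ 2 + x ^ 2 ^ k * x + x ^ 2 + x + 1) *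
    CharTwo.two_eq_zero (R := R)

theorem GaloisField.pow_card_eq_self {p : ℕ} [Fact p.Prime] {n : ℕ} (hn : n ≠ 0)
    (x : GaloisField p n) : x ^ p ^ n = x := by
  have : Fintype (GaloisField p n) := Fintype.ofFinite _
  rw [← GaloisField.card p n hn, Nat.card_eq_fintype_card, FiniteField.pow_card]

theorem sq_eq_self_of_pow_two_pow_eq_self {M : Type*} [Monoid M] {x : M} {m : ℕ}
    (hfix : x ^ 2 ^ (m + 1) = x) (hfrob : x ^ 2 ^ (2 * m + 1) = x) : x ^ 2 = x :=
  calc x ^ 2 = (x ^ 2 ^ (2 * m + 1)) ^ 2 := by rw [hfrob]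
    _ = (x ^ 2 ^ (m + 1)) ^ 2 ^ (m + 1) := by
      rw [← pow_mul, ← pow_mul, ← pow_succ, ← pow_add]
      ring_nf
    _ = x := by rw [hfix, hfix]

theorem Nat.two_pow_two_mul_add_one_mod_three (m : ℕ) : 2 ^ (2 * m + 1) % 3 = 2 := by
  rw [pow_succ, pow_mul, Nat.mul_mod, Nat.pow_mod]
  norm_num

theorem sq_eq_self_of_pow_three_eq_one {M : Type*} [Monoid M] {x : M} {m : ℕ}
    (hcube : x ^ 3 = 1) (hfrob : x ^ 2 ^ (2 * m + 1) = x) : x ^ 2 = x := by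
  rwa [pow_eq_pow_mod _ hcube, Nat.two_pow_two_mul_add_one_mod_three] at hfrob

theorem zero_apn_0_general (m : ℕ)
    (x : GaloisField 2 (2*m+1)) (hx0 : x ≠ 0) (hx1 : x ≠ 1) :
    (x + 1) ^ (2^(m+1)+3) + x ^ (2^(m+1)+3) + 1 ≠ 0 := by
  intro h
  have hfrob : x ^ 2 ^ (2 * m + 1) = x := GaloisField.pow_card_eq_self (by omega) x
  rw [add_one_pow_two_pow_add_three_add_pow_add_one, mul_eq_zero, CharTwo.add_eq_zero] at h
  have hidem : x ^ 2 = x := by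
    rcases h with hfix | hroot
    · exact sq_eq_self_of_pow_two_pow_eq_self hfix hfrob
    · exact sq_eq_self_of_pow_three_eq_one (by linear_combination (x - 1) * hroot) hfrob
  rcases IsIdempotentElem.iff_eq_zero_or_one.mp ((sq x).symm.trans hidem) with h0 | h1
  exacts [hx0 h0, hx1 h1]

theorem zero_apn_0 (m : ℕ) (hm : 0 < m) 
    (x : GaloisField 2 (2*m+1)) (hx0 : x ≠ 0) (hx1 : x ≠ 1) :
    (x + 1) ^ (2^(m+1)+3) + x ^ (2^(m+1)+3) + 1 ≠ 0 :=
  zero_apn_0_general m x hx0 hx1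
end

section
/- Let n = 2m+1 for a positive integer m, and let d = 5·2^m+3. Then the power function F(x) = x^d over F_{2^n} is 0-APN; that is, (x+1)^d + x^d + 1 = 0 has no solution x in F_{2^n} \ {0,1}. -/
/-!
Write `y = x ^ 2 ^ m`. In characteristic two the equation reads `G x y = 0` with `G = zeroApnPoly`,
and the Frobenius power `z ↦ z ^ 2 ^ (m + 1)`, which on `𝔽_{2^(2m+1)}` sends `x ↦ y ^ 2` and
`y ↦ x`, turns it into `G (y ^ 2) x = 0`. Eliminating `y` leaves a polynomial in `x` whose
irreducible factors over `𝔽_2` have degree `1, 2, 3, 4` or `6`, so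
`x ∈ 𝔽_{2^12} ∩ 𝔽_{2^(2m+1)} ⊆ 𝔽_8`. If `3 ∤ 2m+1` this already forces `x ∈ 𝔽_2`. Otherwise
`m ≡ 1 [MOD 3]`, hence `y = x ^ 2`, and `G x (x ^ 2)` has no roots in `𝔽_8 \ 𝔽_2`.
-/

open Function

theorem isPeriodicPt_sq_iff {M : Type*} [Monoid M] {x : M} {n : ℕ} :
    IsPeriodicPt (· ^ 2) n x ↔ x ^ 2 ^ n = x := by
  rw [IsPeriodicPt, IsFixedPt, pow_iterate]

section CharTwo

variable {R : Type*} [CommRing R]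

def zeroApnPoly (x y : R) : R := (y + 1) ^ 5 * (x + 1) ^ 3 + y ^ 5 * x ^ 3 + 1

theorem map_zeroApnPoly {S : Type*} [CommRing S] (f : R →+* S) (x y : R) :
    f (zeroApnPoly x y) = zeroApnPoly (f x) (f y) := by
  simp only [zeroApnPoly, map_add, map_mul, map_pow, map_one]

variable [CharP R 2]

theorem add_one_pow_add_pow_add_one (m : ℕ) (x : R) :
    (x + 1) ^ (5 * 2 ^ m + 3) + x ^ (5 * 2 ^ m + 3) + 1 = zeroApnPoly x (x ^ 2 ^ m) := by
  have hd (z : R) : z ^ (5 * 2 ^ m + 3) = (z ^ 2 ^ m) ^ 5 * z ^ 3 := by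
    rw [pow_add, mul_comm 5, pow_mul]
  rw [hd, hd, add_pow_char_pow, one_pow, zeroApnPoly]

theorem zeroApnPoly_conj_eq_zero {m : ℕ} {x : R} (hx : x ^ 2 ^ (2 * m + 1) = x)
    (h : zeroApnPoly x (x ^ 2 ^ m) = 0) : zeroApnPoly ((x ^ 2 ^ m) ^ 2) x = 0 := by
  set φ := iterateFrobenius R 2 (m + 1)
  have hφx : φ x = (x ^ 2 ^ m) ^ 2 := by
    rw [iterateFrobenius_def, pow_succ, pow_mul]
  have hφy : φ (x ^ 2 ^ m) = x := by
    rw [iterateFrobenius_def, ← pow_mul, ← pow_add, show m + (m + 1) = 2 * m + 1 by ring, hx]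
  simpa [map_zeroApnPoly, hφx, hφy] using congrArg φ h

theorem eliminate_zeroApnPoly {x y : R} (hA : zeroApnPoly x y = 0)
    (hB : zeroApnPoly (y ^ 2) x = 0) :
    x ^ 5 * (x + 1) ^ 5 * (x ^ 2 + x + 1) * ((x ^ 3 + x + 1) * (x ^ 3 + x ^ 2 + 1)) ^ 3 *
      (x ^ 4 + x + 1) ^ 2 * (x ^ 6 + x ^ 5 + x ^ 3 + x ^ 2 + 1) ^ 2 = 0 := by
  unfold zeroApnPoly at hA hB
  -- multipliers from an elimination of `y` over `𝔽_2[x, y]`; `grind` checks the identity mod 2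
  linear_combination (norm := grind)
    (y ^ 5 * (x ^ 44 + x ^ 42 + x ^ 40 + x ^ 37 + x ^ 36 + x ^ 35 + x ^ 34 + x ^ 33 + x ^ 28 +
      x ^ 26 + x ^ 22 + x ^ 20 + x ^ 18 + x ^ 17 + x ^ 16 + x ^ 9 + x ^ 8 + x ^ 7 + x ^ 6 + x ^ 4) +
      y ^ 4 * (x ^ 46 + x ^ 39 + x ^ 37 + x ^ 36 + x ^ 35 + x ^ 34 + x ^ 30 + x ^ 28 + x ^ 22 +
      x ^ 19 + x ^ 18 + x ^ 14 + x ^ 11 + x ^ 10 + x ^ 9 + x ^ 6) + y ^ 3 * (x ^ 46 + x ^ 45 +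
      x ^ 44 + x ^ 43 + x ^ 42 + x ^ 41 + x ^ 39 + x ^ 33 + x ^ 28 + x ^ 25 + x ^ 24 + x ^ 22 +
      x ^ 20 + x ^ 19 + x ^ 15 + x ^ 14 + x ^ 12 + x ^ 11 + x ^ 10 + x ^ 7 + x ^ 6 + x ^ 4) +
      y ^ 2 * (x ^ 47 + x ^ 44 + x ^ 42 + x ^ 41 + x ^ 40 + x ^ 39 + x ^ 37 + x ^ 36 + x ^ 35 +
      x ^ 34 + x ^ 30 + x ^ 28 + x ^ 27 + x ^ 26 + x ^ 25 + x ^ 22 + x ^ 20 + x ^ 18 + x ^ 16 +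
      x ^ 15 + x ^ 11 + x ^ 10 + x ^ 9 + x ^ 6) + y * (x ^ 47 + x ^ 45 + x ^ 44 + x ^ 43 + x ^ 41 +
      x ^ 40 + x ^ 39 + x ^ 38 + x ^ 36 + x ^ 35 + x ^ 34 + x ^ 33 + x ^ 28 + x ^ 27 + x ^ 26 +
      x ^ 21 + x ^ 19 + x ^ 16 + x ^ 13 + x ^ 12 + x ^ 11 + x ^ 9 + x ^ 8 + x ^ 7 + x ^ 6 + x ^ 4) +
      (x ^ 44 + x ^ 43 + x ^ 42 + x ^ 39 + x ^ 36 + x ^ 35 + x ^ 29 + x ^ 27 + x ^ 25 + x ^ 24 +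
      x ^ 20 + x ^ 18 + x ^ 17 + x ^ 14 + x ^ 13 + x ^ 11 + x ^ 10 + x ^ 9 + x ^ 7 + x ^ 5)) * hA +
    (y ^ 4 * (x ^ 42 + x ^ 41 + x ^ 36 + x ^ 35 + x ^ 32 + x ^ 28 + x ^ 26 + x ^ 24 + x ^ 21 +
      x ^ 19 + x ^ 18 + x ^ 16 + x ^ 13 + x ^ 10 + x ^ 9 + x ^ 4) + y ^ 3 * (x ^ 44 + x ^ 41 +
      x ^ 40 + x ^ 38 + x ^ 35 + x ^ 33 + x ^ 28 + x ^ 26 + x ^ 21 + x ^ 19 + x ^ 11 + x ^ 10 +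
      x ^ 9 + x ^ 7 + x ^ 6 + x ^ 4) + y ^ 2 * (x ^ 45 + x ^ 42 + x ^ 41 + x ^ 40 + x ^ 39 + x ^ 38 +
      x ^ 37 + x ^ 36 + x ^ 35 + x ^ 34 + x ^ 30 + x ^ 28 + x ^ 26 + x ^ 25 + x ^ 24 + x ^ 23 +
      x ^ 21 + x ^ 20 + x ^ 19 + x ^ 18 + x ^ 15 + x ^ 12 + x ^ 11 + x ^ 10 + x ^ 9 + x ^ 6) +
      y * (x ^ 45 + x ^ 42 + x ^ 41 + x ^ 39 + x ^ 32 + x ^ 30 + x ^ 28 + x ^ 26 + x ^ 25 + x ^ 24 +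
      x ^ 23 + x ^ 21 + x ^ 19 + x ^ 18 + x ^ 17 + x ^ 15 + x ^ 14 + x ^ 13 + x ^ 10 + x ^ 8) +
      (x ^ 45 + x ^ 43 + x ^ 37 + x ^ 33 + x ^ 32 + x ^ 28 + x ^ 26 + x ^ 25 + x ^ 24 + x ^ 22 +
      x ^ 21 + x ^ 20 + x ^ 19 + x ^ 18 + x ^ 16 + x ^ 15 + x ^ 14 + x ^ 13 + x ^ 7 + x ^ 4)) * hB

theorem pow_two_pow_two_mul_eq_self {x : R} {j : ℕ} (h : x ^ 2 ^ j = x + 1) :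
    x ^ 2 ^ (2 * j) = x := by
  rw [two_mul, pow_add, pow_mul, h, add_pow_char_pow, h, one_pow, add_assoc,
    CharTwo.add_self_eq_zero, add_zero]

theorem sq_eq_self_of_zeroApnPoly_sq {x : R} (h8 : x ^ 2 ^ 3 = x)
    (h : zeroApnPoly x (x ^ 2) = 0) : x ^ 2 = x := by
  unfold zeroApnPoly at h
  grind

variable [IsDomain R]

theorem isPeriodicPt_sq_twelve {x : R}
    (h : x ^ 5 * (x + 1) ^ 5 * (x ^ 2 + x + 1) * ((x ^ 3 + x + 1) * (x ^ 3 + x ^ 2 + 1)) ^ 3 *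
      (x ^ 4 + x + 1) ^ 2 * (x ^ 6 + x ^ 5 + x ^ 3 + x ^ 2 + 1) ^ 2 = 0) :
    IsPeriodicPt (· ^ 2) 12 x := by
  have of_dvd {k : ℕ} (hk : k ∣ 12) (hx : x ^ 2 ^ k = x) : IsPeriodicPt (· ^ 2) 12 x :=
    (isPeriodicPt_sq_iff.2 hx).trans_dvd hk
  simp only [mul_eq_zero, pow_eq_zero_iff, ne_eq, OfNat.ofNat_ne_zero, not_false_eq_true] at h
  rcases h with ((((h1 | h1) | h2) | h3) | h4) | h6
  · exact of_dvd (k := 1) (by norm_num) (by grind)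
  · exact of_dvd (k := 1) (by norm_num) (by grind)
  · exact of_dvd (by norm_num) (pow_two_pow_two_mul_eq_self (j := 1) (by grind))
  · exact of_dvd (k := 3) (by norm_num) (by grind)
  · exact of_dvd (by norm_num) (pow_two_pow_two_mul_eq_self (j := 2) (by grind))
  · exact of_dvd (by norm_num) (pow_two_pow_two_mul_eq_self (j := 3) (by grind))

theorem eq_zero_or_eq_one_of_add_one_pow_add_pow_add_one_eq_zero {m : ℕ} {x : R}
    (hx : x ^ 2 ^ (2 * m + 1) = x)
    (h : (x + 1) ^ (5 * 2 ^ m + 3) + x ^ (5 * 2 ^ m + 3) + 1 = 0) : x = 0 ∨ x = 1 := by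
  rw [add_one_pow_add_pow_add_one] at h
  have hx' : IsPeriodicPt (· ^ 2) (2 * m + 1) x := isPeriodicPt_sq_iff.2 hx
  have h12 := isPeriodicPt_sq_twelve (eliminate_zeroApnPoly h (zeroApnPoly_conj_eq_zero hx h))
  have h3 : IsPeriodicPt (· ^ 2) 3 x := by
    refine (h12.gcd hx').trans_dvd ?_
    have hcop4 : Nat.Coprime (2 ^ 2) (2 * m + 1) :=
      Nat.Coprime.pow_left 2 (Nat.coprime_two_left.2 (odd_two_mul_add_one m))
    rw [show 12 = 3 * 2 ^ 2 from rfl, Nat.Coprime.gcd_mul_right_cancel 3 hcop4]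
    exact Nat.gcd_dvd_left 3 _
  suffices x ^ 2 = x from IsIdempotentElem.iff_eq_zero_or_one.1 ((sq x).symm.trans this)
  rcases Nat.coprime_or_dvd_of_prime Nat.prime_three (2 * m + 1) with hcop | hdvd
  · have h1 : IsPeriodicPt (· ^ 2) 1 x := hcop ▸ h3.gcd hx'
    rwa [isPeriodicPt_sq_iff, pow_one] at h1
  · have hy : x ^ 2 ^ m = x ^ 2 := by
      have := h3.iterate_mod_apply m
      rw [show m % 3 = 1 by omega, pow_iterate, pow_iterate] at this
      simpa using this.symm
    exact sq_eq_self_of_zeroApnPoly_sq (isPeriodicPt_sq_iff.1 h3) (hy ▸ h)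

end CharTwo

theorem zero_apn_1_general (m : ℕ)
    (x : GaloisField 2 (2*m+1)) (hx0 : x ≠ 0) (hx1 : x ≠ 1) :
    (x + 1) ^ (5*2^m+3) + x ^ (5*2^m+3) + 1 ≠ 0 := by
  intro h
  have : Fintype (GaloisField 2 (2 * m + 1)) := Fintype.ofFinite _
  have hx : x ^ 2 ^ (2 * m + 1) = x := by
    rw [← GaloisField.card 2 _ (by omega), Nat.card_eq_fintype_card, FiniteField.pow_card]
  exact (eq_zero_or_eq_one_of_add_one_pow_add_pow_add_one_eq_zero hx h).elim hx0 hx1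

theorem zero_apn_1 (m : ℕ) (hm : 0 < m) 
    (x : GaloisField 2 (2*m+1)) (hx0 : x ≠ 0) (hx1 : x ≠ 1) :
    (x + 1) ^ (5*2^m+3) + x ^ (5*2^m+3) + 1 ≠ 0 :=
  zero_apn_1_general m x hx0 hx1
end

section
/- Let m be a positive integer with m not congruent to 5 modulo 14, let n = 3m-1, and let d = 5·2^(m-1)+1. Then the power function F(x) = x^d over F_{2^n} is 0-APN; that is, (x+1)^d + x^d + 1 = 0 has no solution x in F_{2^n} \ {0,1}. -/
/-!
Write `k = m - 1` and `Y = X ^ 2 ^ k`, so that the equation reads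
`(X + 1) (Y + 1) ^ 5 + X Y ^ 5 + 1 = 0`. Over a root `ω` of `t ^ 2 + t + 1` it splits as
`(X + ω) a ^ 5 = (X + ω + 1) (a + 1) ^ 5` with `a = Y + ω`. As `X ^ 2 ^ (3k + 2) = X` and
`ω ^ 4 = ω`, we have `a ^ 2 ^ (2k + 2) = X + ω`, so `a ^ N = (a + 1) ^ N` for
`N = 2 ^ (2k + 2) + 5`. Raising the split equation to the power `2 ^ k` gives the same with
`N = 5 · 2 ^ k + 1` or `N = 5 · 2 ^ k - 1`, according as `ω ^ 2 ^ k` is `ω` or `ω + 1`.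
Hence the order of `a / (a + 1)` divides `gcd (4 ^ (k + 1) + 5, 25 · 4 ^ k - 1)`, which divides
`129 = 3 · 43` and is prime to `43` because `5 · 2 ^ k ≢ ±1 [MOD 43]`. So
`a ^ 3 = (a + 1) ^ 3`, i.e. `a ^ 2 + a + 1 = 0`, which forces `Y ∈ {0, 1}`.
-/

lemma not_forty_three_dvd_five_mul_two_pow_add_one_mul_sub_one (k : ℕ) :
    ¬ 43 ∣ (5 * 2 ^ k + 1) * (5 * 2 ^ k - 1) := by
  have : 1 ≤ 5 * 2 ^ k := Nat.one_le_two_pow.trans (Nat.le_mul_of_pos_left _ (by norm_num))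
  rw [← ZMod.natCast_eq_zero_iff, Nat.cast_mul, Nat.cast_sub this]
  push_cast
  rw [pow_eq_pow_mod k (show (2 : ZMod 43) ^ 14 = 1 by decide)]
  have := Nat.mod_lt k (show 0 < 14 by norm_num)
  interval_cases k % 14 <;> decide

lemma gcd_two_pow_add_five_dvd_three (k : ℕ) :
    (2 ^ (2 * k + 2) + 5).gcd ((5 * 2 ^ k + 1) * (5 * 2 ^ k - 1)) ∣ 3 := by
  have hid : 25 * (2 ^ (2 * k + 2) + 5) = 4 * ((5 * 2 ^ k + 1) * (5 * 2 ^ k - 1)) + 43 * 3 := by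
    have : 1 ≤ 5 * 2 ^ k := Nat.one_le_two_pow.trans (Nat.le_mul_of_pos_left _ (by norm_num))
    rw [pow_add, pow_mul']
    zify [this]
    ring
  have h129 : (2 ^ (2 * k + 2) + 5).gcd ((5 * 2 ^ k + 1) * (5 * 2 ^ k - 1)) ∣ 43 * 3 :=
    (Nat.dvd_add_right ((Nat.gcd_dvd_right _ _).mul_left 4)).mp
      (hid ▸ (Nat.gcd_dvd_left _ _).mul_left 25)
  refine (Nat.Coprime.symm ?_).dvd_of_dvd_mul_left h129
  exact (Nat.Prime.coprime_iff_not_dvd (by norm_num)).mpr fun h =>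
    not_forty_three_dvd_five_mul_two_pow_add_one_mul_sub_one k (h.trans (Nat.gcd_dvd_right _ _))

section CommRing

variable {R : Type*} [CommRing R] {ω : R}

lemma pow_two_pow_two_mul (hω : ω ^ 2 + ω + 1 = 0) (k : ℕ) : ω ^ 2 ^ (2 * k) = ω := by
  induction k with
  | zero => simp
  | succ k ih =>
    rw [mul_add, pow_add, pow_mul, ih]
    linear_combination (ω ^ 2 - ω) * hω

lemma pow_two_pow_eq_or_eq_add_one [CharP R 2] (hω : ω ^ 2 + ω + 1 = 0) (k : ℕ) :
    ω ^ 2 ^ k = ω ∨ ω ^ 2 ^ k = ω + 1 := by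
  induction k with
  | zero => simp
  | succ k ih =>
    rw [pow_succ, pow_mul]
    rcases ih with h | h <;> rw [h]
    · exact Or.inr (by linear_combination hω - (ω + 1) * CharTwo.two_eq_zero (R := R))
    · exact Or.inl (by linear_combination hω)

lemma mul_pow_five_add_mul_pow_five [CharP R 2] (hω : ω ^ 2 + ω + 1 = 0) (X Y : R) :
    (X + ω) * (Y + ω) ^ 5 + (X + ω + 1) * (Y + ω + 1) ^ 5 =
      (X + 1) * (Y + 1) ^ 5 + X * Y ^ 5 + 1 := by
  linear_combination (norm := (ring_nf; reduce_mod_char!))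
    (X + Y + (1 + X + Y) * (ω ^ 2 + ω + 1)) * hω

end CommRing

section Field

variable {K : Type*} [Field K] [CharP K 2] {a : K} {N M : ℕ}

lemma ne_zero_of_pow_eq_add_one_pow (hN : N ≠ 0) (h : a ^ N = (a + 1) ^ N) :
    a ≠ 0 ∧ a + 1 ≠ 0 := by
  constructor
  · rintro rfl
    simp [zero_pow hN] at h
  · intro ha
    have : a = 1 := by linear_combination ha - CharTwo.two_eq_zero (R := K)
    rw [ha, zero_pow hN, this, one_pow] at h
    exact one_ne_zero h

lemma pow_eq_add_one_pow_of_mul_pow_eq {c : K} (ha : a ≠ 0) (hb : a + 1 ≠ 0)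
    (hc : c = a ∨ c = a + 1) (h : c * a ^ N = (c + 1) * (a + 1) ^ N) :
    a ^ ((N + 1) * (N - 1)) = (a + 1) ^ ((N + 1) * (N - 1)) := by
  rcases hc with rfl | rfl
  · rw [← pow_succ', ← pow_succ'] at h
    rw [pow_mul, h, ← pow_mul]
  · obtain _ | n := N
    · simp
    rw [CharTwo.add_cancel_right, pow_succ, pow_succ] at h
    have hpow : a ^ n = (a + 1) ^ n :=
      mul_left_cancel₀ (mul_ne_zero ha hb) (by linear_combination h)
    rw [Nat.add_sub_cancel, mul_comm, pow_mul, hpow, ← pow_mul]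

lemma sq_add_add_one_eq_zero_of_pow_eq_add_one_pow (hN0 : N ≠ 0)
    (hN : a ^ N = (a + 1) ^ N) (hM : a ^ M = (a + 1) ^ M) (hNM : N.gcd M ∣ 3) :
    a ^ 2 + a + 1 = 0 := by
  have hb := (ne_zero_of_pow_eq_add_one_pow hN0 hN).2
  have hu {n : ℕ} (h : a ^ n = (a + 1) ^ n) : (a / (a + 1)) ^ n = 1 := by
    rw [div_pow, h, div_self (pow_ne_zero _ hb)]
  obtain ⟨c, hc⟩ := hNM
  have h3 : (a / (a + 1)) ^ 3 = 1 := by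
    rw [hc, pow_mul, pow_gcd_eq_one.mpr ⟨hu hN, hu hM⟩, one_pow]
  rw [div_pow, div_eq_one_iff_eq (pow_ne_zero _ hb)] at h3
  linear_combination -h3 - (a ^ 2 + a) * CharTwo.two_eq_zero (R := K)

variable {ω X : K} {k : ℕ}

lemma sq_add_add_one_eq_zero_of_add_one_pow_add_pow_add_one_eq_zero
    (hω : ω ^ 2 + ω + 1 = 0) (hX : X ^ 2 ^ (3 * k + 2) = X)
    (hE : (X + 1) ^ (5 * 2 ^ k + 1) + X ^ (5 * 2 ^ k + 1) + 1 = 0) :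
    (X ^ 2 ^ k + ω) ^ 2 + (X ^ 2 ^ k + ω) + 1 = 0 := by
  set Y := X ^ 2 ^ k with hY
  have hkey : (X + ω) * (Y + ω) ^ 5 = (X + ω + 1) * (Y + ω + 1) ^ 5 := by
    rw [← CharTwo.add_eq_zero, mul_pow_five_add_mul_pow_five hω, ← hE, pow_succ' (X + 1),
      pow_succ' X, mul_comm 5, pow_mul, pow_mul, add_pow_char_pow, one_pow]
  have hfrob : (Y + ω) ^ 2 ^ (2 * k + 2) = X + ω := by
    rw [add_pow_char_pow, hY, ← pow_mul, ← pow_add, show k + (2 * k + 2) = 3 * k + 2 by ring,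
      hX, show 2 * k + 2 = 2 * (k + 1) by ring, pow_two_pow_two_mul hω]
  have hN : (Y + ω) ^ (2 ^ (2 * k + 2) + 5) = (Y + ω + 1) ^ (2 ^ (2 * k + 2) + 5) := by
    rw [pow_add (Y + ω), pow_add (Y + ω + 1), add_pow_char_pow (Y + ω) 1, one_pow, hfrob]
    exact hkey
  obtain ⟨ha, hb⟩ := ne_zero_of_pow_eq_add_one_pow (by positivity) hN
  have hM : (Y + ω) ^ ((5 * 2 ^ k + 1) * (5 * 2 ^ k - 1)) =
      (Y + ω + 1) ^ ((5 * 2 ^ k + 1) * (5 * 2 ^ k - 1)) := by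
    refine pow_eq_add_one_pow_of_mul_pow_eq ha hb (c := Y + ω ^ 2 ^ k) ?_ ?_
    · rcases pow_two_pow_eq_or_eq_add_one hω k with h | h <;> simp [h, add_assoc]
    · have hkey' := congrArg (· ^ 2 ^ k) hkey
      simpa only [mul_pow, ← pow_mul, add_pow_char_pow X, add_pow_char_pow (X + ω), ← hY,
        one_pow, mul_comm 5] using hkey'
  exact sq_add_add_one_eq_zero_of_pow_eq_add_one_pow (by positivity) hN hM
    (gcd_two_pow_add_five_dvd_three k)

lemma eq_zero_or_eq_one_of_add_one_pow_add_pow_add_one_eq_zero_s2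
    (hω : ω ^ 2 + ω + 1 = 0) (hX : X ^ 2 ^ (3 * k + 2) = X)
    (hE : (X + 1) ^ (5 * 2 ^ k + 1) + X ^ (5 * 2 ^ k + 1) + 1 = 0) : X = 0 ∨ X = 1 := by
  have h := sq_add_add_one_eq_zero_of_add_one_pow_add_pow_add_one_eq_zero hω hX hE
  have hY : X ^ 2 ^ k * (X + 1) ^ 2 ^ k = 0 := by
    rw [add_pow_char_pow, one_pow]
    linear_combination h - hω - X ^ 2 ^ k * ω * CharTwo.two_eq_zero (R := K)
  refine (mul_eq_zero.mp hY).imp (pow_eq_zero_iff (by positivity)).mp fun h1 => ?_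
  linear_combination (pow_eq_zero_iff (by positivity)).mp h1 - CharTwo.two_eq_zero (R := K)

end Field

theorem zero_apn_2_general (m : ℕ) (hm : 0 < m)
    (x : GaloisField 2 (3*m-1)) (hx0 : x ≠ 0) (hx1 : x ≠ 1) :
    (x + 1) ^ (5*2^(m-1)+1) + x ^ (5*2^(m-1)+1) + 1 ≠ 0 := by
  obtain ⟨k, rfl⟩ := Nat.exists_eq_add_one.mpr hm
  let L := AlgebraicClosure (GaloisField 2 (3 * (k + 1) - 1))
  obtain ⟨ω, hω⟩ : ∃ ω : L, ω ^ 2 + ω + 1 = 0 := by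
    obtain ⟨ω, hω⟩ := IsAlgClosed.exists_root (k := L) (Polynomial.X ^ 2 + Polynomial.X + 1)
      (by rw [show (Polynomial.X ^ 2 + Polynomial.X + 1 : Polynomial L).degree = 2 by
        compute_degree!]; decide)
    exact ⟨ω, by simpa using hω⟩
  have hx : x ^ 2 ^ (3 * k + 2) = x := by
    have : Fintype (GaloisField 2 (3 * (k + 1) - 1)) := Fintype.ofFinite _
    have hcard : Fintype.card (GaloisField 2 (3 * (k + 1) - 1)) = 2 ^ (3 * k + 2) := by
      rw [← Nat.card_eq_fintype_card, GaloisField.card 2 _ (by omega)]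
      congr 1
    rw [← hcard]
    exact FiniteField.pow_card x
  rw [Nat.add_sub_cancel]
  intro hE
  have hφ := (algebraMap (GaloisField 2 (3 * (k + 1) - 1)) L).injective
  rcases eq_zero_or_eq_one_of_add_one_pow_add_pow_add_one_eq_zero_s2 (k := k) hω
    (X := algebraMap _ L x) (by rw [← map_pow, hx]) (by simpa using congrArg (algebraMap _ L) hE)
    with h | h
  · exact hx0 (hφ (by simpa using h))
  · exact hx1 (hφ (by simpa using h))

theorem zero_apn_2 (m : ℕ) (hm : 0 < m) (hm14 : m % 14 ≠ 5)
    (x : GaloisField 2 (3*m-1)) (hx0 : x ≠ 0) (hx1 : x ≠ 1) :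
    (x + 1) ^ (5*2^(m-1)+1) + x ^ (5*2^(m-1)+1) + 1 ≠ 0 :=
  zero_apn_2_general m hm x hx0 hx1
end

section
/- Let m be a positive integer, n = 3m+1, and d = 2^(2m) + 2^(m-1) + 1. Then the power function F(x) = x^d over F_{2^n} is 0-APN; that is, (x+1)^d + x^d + 1 = 0 has no solution x in F_{2^n} \ {0,1}. -/
/-! Write `a = x ^ 2 ^ (2m)` and `b = x ^ 2 ^ (m - 1)`. In characteristic 2 the equation reads
`e₁(a, b, x) + e₂(a, b, x) = 0`. The Frobenius power `y ↦ y ^ 2 ^ (m + 1)` sends `(a, b, x)` to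
`(x, a, b⁴)`, and subtracting the transformed equation leaves `(b - b⁴) (a + x + 1) = 0`.
If `b = b⁴`, then `b` is a cube root of unity, which forces `a = b = x` and `x² = x`.
If `a = x + 1`, the equation becomes `x² + x + 1 = 0`, so `x` is a cube root of unity, hence
`a = x`, which is absurd. -/

section CommRing

variable {R : Type*} [CommRing R]

/-- In characteristic 2 this is `(a + 1) (b + 1) (c + 1) + a b c + 1`. -/
def zeroApnForm (a b c : R) : R := a * b + a * c + b * c + (a + b + c)

theorem map_zeroApnForm {S : Type*} [CommRing S] (f : R →+* S) (a b c : R) :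
    f (zeroApnForm a b c) = zeroApnForm (f a) (f b) (f c) := by
  simp only [zeroApnForm, map_add, map_mul]

theorem zeroApnForm_sub_zeroApnForm (a b c d : R) :
    zeroApnForm a b c - zeroApnForm c a d = (b - d) * (a + c + 1) := by
  unfold zeroApnForm; ring

variable [CharP R 2]

theorem add_one_pow_add_pow_add_one_s5 (x : R) (i j : ℕ) :
    (x + 1) ^ (2 ^ i + 2 ^ j + 1) + x ^ (2 ^ i + 2 ^ j + 1) + 1 =
      zeroApnForm (x ^ 2 ^ i) (x ^ 2 ^ j) x := by
  simp only [pow_add, pow_one, add_pow_char_pow, one_pow]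
  unfold zeroApnForm
  linear_combination (x ^ 2 ^ i * x ^ 2 ^ j * x + 1) * CharTwo.two_eq_zero (R := R)

theorem zeroApnForm_add_one_left (b c : R) : zeroApnForm (c + 1) b c = c ^ 2 + c + 1 := by
  unfold zeroApnForm
  linear_combination (b * c + b + c) * CharTwo.two_eq_zero (R := R)

theorem zeroApnForm_self (c : R) : zeroApnForm c c c = c ^ 2 - c := by
  unfold zeroApnForm
  linear_combination (c ^ 2 + 2 * c) * CharTwo.two_eq_zero (R := R)

end CommRing

theorem pow_four_pow_of_pow_three_eq_one {M : Type*} [Monoid M] {y : M} (hy : y ^ 3 = 1) (j : ℕ) :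
    y ^ 4 ^ j = y := by
  rw [pow_eq_pow_mod _ hy, Nat.pow_mod]
  simp

theorem eq_zero_or_one_of_zeroApnForm_eq_zero {R : Type*} [CommRing R] [IsDomain R] [CharP R 2]
    (σ : R →+* R) {a b x : R} (hσa : σ a = x) (hσb : σ b = a) (hσx : σ x = b ^ 4) {i j : ℕ}
    (ha : a = x ^ 4 ^ i) (hx : x = b ^ 4 ^ j) (h : zeroApnForm a b x = 0) : x = 0 ∨ x = 1 := by
  have hσ : zeroApnForm x a (b ^ 4) = 0 := by
    simpa only [map_zeroApnForm, map_zero, hσa, hσb, hσx] using congrArg σ h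
  have hfac : (b - b ^ 4) * (a + x + 1) = 0 := by
    rw [← zeroApnForm_sub_zeroApnForm, h, hσ, sub_zero]
  rcases mul_eq_zero.mp hfac with hb | hax
  · obtain rfl | hb0 := eq_or_ne b 0
    · simp [hx]
    have hb3 : b ^ 3 = 1 := by
      refine mul_right_cancel₀ hb0 ?_
      linear_combination -hb
    have hxb : x = b := hx.trans (pow_four_pow_of_pow_three_eq_one hb3 j)
    have hab : a = b := by rw [ha, hxb, pow_four_pow_of_pow_three_eq_one hb3 i]
    rw [hab, hxb, zeroApnForm_self, sub_eq_zero] at h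
    rw [hxb]
    exact eq_zero_or_one_of_sq_eq_self h
  · rw [add_assoc, CharTwo.add_eq_zero] at hax
    rw [hax, zeroApnForm_add_one_left] at h
    have hx3 : x ^ 3 = 1 := by linear_combination (x - 1) * h
    rw [pow_four_pow_of_pow_three_eq_one hx3] at ha
    exact absurd (left_eq_add.mp (ha.symm.trans hax)) one_ne_zero

theorem zero_apn_5 (m : ℕ) (hm : 0 < m) 
    (x : GaloisField 2 (3*m+1)) (hx0 : x ≠ 0) (hx1 : x ≠ 1) :
    (x + 1) ^ (2^(2*m)+2^(m-1)+1) + x ^ (2^(2*m)+2^(m-1)+1) + 1 ≠ 0 := by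
  have hx : x ^ 2 ^ (3 * m + 1) = x := by
    have := Fintype.ofFinite (GaloisField 2 (3 * m + 1))
    rw [← GaloisField.card 2 _ (by omega), Nat.card_eq_fintype_card, FiniteField.pow_card]
  have frob (e f : ℕ) : (x ^ 2 ^ e) ^ 2 ^ f = x ^ 2 ^ (e + f) := by rw [← pow_mul, ← pow_add]
  have four (e : ℕ) : 4 ^ e = 2 ^ (2 * e) := by rw [pow_mul]; rfl
  rw [add_one_pow_add_pow_add_one_s5]
  intro h
  refine (eq_zero_or_one_of_zeroApnForm_eq_zero (iterateFrobenius _ 2 (m + 1)) ?_ ?_ ?_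
    (i := m) (j := m + 1) ?_ ?_ h).elim hx0 hx1
  · rw [iterateFrobenius_def, frob, show 2 * m + (m + 1) = 3 * m + 1 by ring, hx]
  · rw [iterateFrobenius_def, frob, show m - 1 + (m + 1) = 2 * m by omega]
  · rw [iterateFrobenius_def, ← pow_mul, show (4 : ℕ) = 2 ^ 2 from rfl, ← pow_add,
      show m - 1 + 2 = m + 1 by omega]
  · rw [four]
  · rw [four, frob, show m - 1 + 2 * (m + 1) = 3 * m + 1 by omega, hx]
end

section
/- Let m be a positive integer, n = 3m+1, and d = 2^(2m) + 3·2^(m-1) - 1. Then the power function F(x) = x^d over F_{2^n} is 0-APN; that is, (x+1)^d + x^d + 1 = 0 has no solution x in F_{2^n} \ {0,1}. -/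
/-!
Put `y = x ^ 2 ^ (m - 1)` and `z = x ^ 2 ^ (2 * m)`. Since `d + 1 = 2 ^ (2 * m) + 2 ^ m + 2 ^ (m - 1)`,
multiplying `(x + 1) ^ d + x ^ d + 1 = 0` by `x * (x + 1)` turns it into a polynomial relation
`R(x, y, z)`. The Frobenius power `σ = (·) ^ 2 ^ (m + 1)` sends `(x, y, z)` to `(y ^ 4, z, x)`, because
`x ^ 2 ^ (3 * m + 1) = x`; so `R` also holds at `(y ^ 4, z, x)` and at `(z ^ 4, x, y ^ 4)`. Over `𝔽₂`
these three relations force `(x + z) ^ 2 * x (x + 1) * (y (y + 1)) ^ 3 * (z (z + 1)) ^ 2 = 0`, and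
`R(x, y, x)` reads `x (x + 1) y (y + 1) = 0`. As `y` and `z` are Frobenius images of `x`, in every case
`x (x + 1) = 0`.
-/

/-- With `y = x ^ 2 ^ (m - 1)` and `z = x ^ 2 ^ (2 * m)`, this is the equation
`(x + 1) ^ d + x ^ d + 1 = 0` multiplied by `x * (x + 1)`. -/
def ZeroAPNRel {R : Type*} [CommRing R] (x y z : R) : Prop :=
  (x + z) * (y ^ 3 + x) = x * y * (y + 1) * (z + 1)

namespace ZeroAPNRel

variable {R S : Type*} [CommRing R] [CommRing S]

theorem map {x y z : R} (h : ZeroAPNRel x y z) (φ : R →+* S) :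
    ZeroAPNRel (φ x) (φ y) (φ z) := by
  simpa [ZeroAPNRel] using congrArg φ h

theorem of_add_one_pow_add_pow_add_one_eq_zero [CharP R 2] {x : R} {k e : ℕ}
    (he : e + 1 = 2 ^ (2 * k + 2) + 2 ^ (k + 1) + 2 ^ k) (h : (x + 1) ^ e + x ^ e + 1 = 0) :
    ZeroAPNRel x (x ^ 2 ^ k) (x ^ 2 ^ (2 * k + 2)) := by
  have hpow (a : R) : a ^ (e + 1) = a ^ 2 ^ (2 * k + 2) * (a ^ 2 ^ k) ^ 2 * a ^ 2 ^ k := by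
    rw [he, pow_add, pow_add, pow_succ 2 k, pow_mul]
  have hx := hpow x
  have hx1 := hpow (x + 1)
  simp only [add_pow_char_pow, one_pow] at hx1
  unfold ZeroAPNRel
  linear_combination (norm := (ring_nf; reduce_mod_char!)) x * (x + 1) * h + x * hx1 + (x + 1) * hx

/-- The cofactors come from a Gröbner basis computation over `𝔽₂`. -/
theorem cyclic_mul_eq_zero [CharP R 2] {x y z : R} (h₁ : ZeroAPNRel x y z)
    (h₂ : ZeroAPNRel (y ^ 4) z x) (h₃ : ZeroAPNRel (z ^ 4) x (y ^ 4)) :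
    (x + z) ^ 2 * (x * (x + 1)) * (y * (y + 1)) ^ 3 * (z * (z + 1)) ^ 2 = 0 := by
  unfold ZeroAPNRel at h₁ h₂ h₃
  linear_combination (norm := (ring_nf; reduce_mod_char!))
    z * (z + 1) * (x^2*y^7 + x^2*y^6*z + x^2*y^5*z + y^7*z + y^6*z^2 + x^3*y^4 + x^2*y^5
      + x^2*y^4*z + x*y^4*z^2 + x*y^2*z^4 + y^3*z^4 + x^2*y^4 + x^2*y^3*z + x^2*y^2*z^2
      + x*y^3*z^2 + x*y^2*z^3 + x*y*z^4 + y^3*z^3 + y^2*z^4 + x^3*z^2 + x*y^3*z + x*y*z^3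
      + y^3*z^2 + x*z^3) * h₁
    + (x^3*y^2*z^2 + x^2*y^2*z^3 + x^3*y^2*z + x^3*y*z^2 + x^2*y^2*z^2 + x^2*y*z^3
      + x*y^2*z^3 + x*y*z^4 + x*z^5 + y^2*z^4 + y*z^5 + x^3*y*z + x^3*z^2 + x*y^2*z^2
      + x*y*z^3 + y^2*z^3 + x^4 + x^3*y + x^2*z^2 + x*y*z^2 + x*z^3 + x*z^2) * h₂
    + (x + y) * (y ^ 4 + x) * h₃

theorem mul_self_add_one_eq_zero [NoZeroDivisors R] [CharP R 2] {x y z : R}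
    (h₁ : ZeroAPNRel x y z) (h₂ : ZeroAPNRel (y ^ 4) z x) (h₃ : ZeroAPNRel (z ^ 4) x (y ^ 4)) :
    x * (x + 1) = 0 ∨ y * (y + 1) = 0 ∨ z * (z + 1) = 0 := by
  rcases _root_.mul_eq_zero.mp (cyclic_mul_eq_zero h₁ h₂ h₃) with h | hZ
  · rcases _root_.mul_eq_zero.mp h with h | hY
    · rcases _root_.mul_eq_zero.mp h with hxz | hX
      · obtain rfl := CharTwo.add_eq_zero.mp (pow_eq_zero_iff two_ne_zero |>.mp hxz)
        unfold ZeroAPNRel at h₁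
        have hXY : x * (x + 1) * (y * (y + 1)) = 0 := by
          linear_combination (norm := (ring_nf; reduce_mod_char!)) h₁
        exact (_root_.mul_eq_zero.mp hXY).imp_right Or.inl
      · exact Or.inl hX
    · exact Or.inr (Or.inl (pow_eq_zero_iff three_ne_zero |>.mp hY))
  · exact Or.inr (Or.inr (pow_eq_zero_iff two_ne_zero |>.mp hZ))

end ZeroAPNRel

theorem mul_add_one_pow_expChar_pow {R : Type*} [CommRing R] {p : ℕ} [ExpChar R p] (a : R)
    (k : ℕ) : (a * (a + 1)) ^ p ^ k = a ^ p ^ k * (a ^ p ^ k + 1) := by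
  rw [mul_pow, add_pow_expChar_pow, one_pow]

theorem GaloisField.pow_pow_eq_self {p : ℕ} [Fact p.Prime] (n : ℕ) (a : GaloisField p n) :
    a ^ p ^ n = a := by
  rcases eq_or_ne n 0 with rfl | hn
  · exact pow_one a
  have := Fintype.ofFinite (GaloisField p n)
  rw [← GaloisField.card p n hn, Nat.card_eq_fintype_card]
  exact FiniteField.pow_card a

theorem zero_apn_6 (m : ℕ) (hm : 0 < m) 
    (x : GaloisField 2 (3*m+1)) (hx0 : x ≠ 0) (hx1 : x ≠ 1) :
    (x + 1) ^ (2^(2*m)+3*2^(m-1)-1) + x ^ (2^(2*m)+3*2^(m-1)-1) + 1 ≠ 0 := by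
  obtain ⟨k, rfl⟩ := Nat.exists_eq_add_one_of_ne_zero hm.ne'
  intro h
  have he : 2 ^ (2 * (k + 1)) + 3 * 2 ^ (k + 1 - 1) - 1 + 1
      = 2 ^ (2 * k + 2) + 2 ^ (k + 1) + 2 ^ k := by
    rw [Nat.add_sub_cancel, Nat.sub_add_cancel (Nat.one_le_two_pow.trans (Nat.le_add_right _ _))]
    ring
  set y := x ^ 2 ^ k
  set z := x ^ 2 ^ (2 * k + 2)
  have h₁ : ZeroAPNRel x y z := .of_add_one_pow_add_pow_add_one_eq_zero he h
  let σ := iterateFrobenius (GaloisField 2 (3 * (k + 1) + 1)) 2 (k + 2)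
  have hσx : σ x = y ^ 4 := by simp only [σ, y, iterateFrobenius_def, ← pow_mul, pow_add]; norm_num
  have hσy : σ y = z := by
    simp only [σ, y, z, iterateFrobenius_def, ← pow_mul, ← pow_add]
    rw [show k + (k + 2) = 2 * k + 2 by ring]
  have hσz : σ z = x := by
    simp only [σ, z, iterateFrobenius_def, ← pow_mul, ← pow_add]
    rw [show 2 * k + 2 + (k + 2) = 3 * (k + 1) + 1 by ring, GaloisField.pow_pow_eq_self]
  have h₂ : ZeroAPNRel (y ^ 4) z x := by simpa only [hσx, hσy, hσz] using h₁.map σ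
  have h₃ : ZeroAPNRel (z ^ 4) x (y ^ 4) := by
    simpa only [map_pow, hσx, hσy, hσz] using h₂.map σ
  have hX : x * (x + 1) ≠ 0 := mul_ne_zero hx0 fun h => hx1 (CharTwo.add_eq_zero.mp h)
  have hXpow (j : ℕ) : x ^ 2 ^ j * (x ^ 2 ^ j + 1) ≠ 0 := by
    rw [← mul_add_one_pow_expChar_pow]
    exact pow_ne_zero _ hX
  rcases ZeroAPNRel.mul_self_add_one_eq_zero h₁ h₂ h₃ with h | h | h
  exacts [hX h, hXpow k h, hXpow (2 * k + 2) h]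
end

section
/- Let m be a positive integer, n = 4m-1, and d = 3·2^m + 1. Then the power function F(x) = x^d over F_{2^n} is 0-APN; that is, (x+1)^d + x^d + 1 = 0 has no solution x in F_{2^n} \ {0,1}. -/
/-!
Write `y = x ^ 2 ^ m`. In characteristic 2 the Frobenius map gives `(x + 1) ^ 2 ^ m = y + 1`, so
`(x + 1) ^ d + x ^ d + 1 = (y + 1) ^ 3 (x + 1) + y ^ 3 x + 1 = (y + x) (y ^ 2 + y + 1)`.
If `y = x`, then `x` is fixed by both `φ ^ m` and `φ ^ (4m - 1)`, where `φ` is the Frobenius map, hence by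
`φ ^ 4m` and so by `φ`; thus `x ∈ 𝔽₂`. If `y ^ 2 + y + 1 = 0`, then `y` generates `𝔽₄`, which does not
embed into `𝔽_{2^n}` for odd `n`: indeed `φ ^ n` would send `y` to `y ^ 2 = y + 1 ≠ y`.
-/

theorem pow_pow_eq_self_of_pow_eq_self {M : Type*} [Monoid M] {x : M} {a : ℕ} (h : x ^ a = x)
    (k : ℕ) : x ^ a ^ k = x := by
  induction k with
  | zero => rw [pow_zero, pow_one]
  | succ k ih => rw [pow_succ, pow_mul, ih, h]

theorem eq_zero_or_one_of_pow_two_pow_eq_self {G₀ : Type*} [MonoidWithZero G₀]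
    [IsLeftCancelMulZero G₀] {x : G₀} {n : ℕ} (hn : x ^ 2 ^ n = x) (hn' : x ^ 2 ^ (n + 1) = x) :
    x = 0 ∨ x = 1 := by
  refine IsIdempotentElem.iff_eq_zero_or_one.mp ?_
  calc x * x = (x ^ 2 ^ n) ^ 2 := by rw [hn, sq]
    _ = x := by rw [← pow_mul, ← pow_succ, hn']

namespace CharTwo

variable {R : Type*} [CommRing R] [CharP R 2]

theorem add_one_pow_add_pow_add_one_eq_mul (x : R) (m : ℕ) :
    (x + 1) ^ (3 * 2 ^ m + 1) + x ^ (3 * 2 ^ m + 1) + 1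
      = (x ^ 2 ^ m + x) * ((x ^ 2 ^ m) ^ 2 + x ^ 2 ^ m + 1) := by
  have hd : ∀ a : R, a ^ (3 * 2 ^ m + 1) = (a ^ 2 ^ m) ^ 3 * a := fun a => by
    rw [pow_succ, mul_comm 3, pow_mul]
  rw [hd, hd, add_pow_char_pow, one_pow]
  set y := x ^ 2 ^ m
  linear_combination (y ^ 3 * x + y ^ 2 * x + y * x + y ^ 2 + y + 1) * two_eq_zero (R := R)

theorem pow_two_pow_of_sq_add_self_add_one_eq_zero {y : R} (hy : y ^ 2 + y + 1 = 0) {n : ℕ}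
    (hn : Odd n) : y ^ 2 ^ n = y + 1 := by
  have hy2 : y ^ 2 = y + 1 := by linear_combination hy - (y + 1) * two_eq_zero (R := R)
  have hy4 : y ^ 4 = y := by
    linear_combination (y ^ 2 + y + 2) * hy2 + (y + 1) * two_eq_zero (R := R)
  obtain ⟨k, rfl⟩ := hn
  rw [pow_succ, pow_mul, pow_mul, show (2 : ℕ) ^ 2 = 4 by norm_num,
    pow_pow_eq_self_of_pow_eq_self hy4, hy2]

end CharTwo

theorem zero_apn_7 (m : ℕ) (hm : 0 < m) 
    (x : GaloisField 2 (4*m-1)) (hx0 : x ≠ 0) (hx1 : x ≠ 1) :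
    (x + 1) ^ (3*2^m+1) + x ^ (3*2^m+1) + 1 ≠ 0 := by
  have : Fintype (GaloisField 2 (4*m-1)) := Fintype.ofFinite _
  have hcard : Fintype.card (GaloisField 2 (4*m-1)) = 2 ^ (4*m-1) := by
    rw [← Nat.card_eq_fintype_card, GaloisField.card 2 _ (by omega)]
  have hfix (a : GaloisField 2 (4*m-1)) : a ^ 2 ^ (4*m-1) = a := hcard ▸ FiniteField.pow_card a
  rw [CharTwo.add_one_pow_add_pow_add_one_eq_mul, mul_ne_zero_iff, Ne, CharTwo.add_eq_zero]
  constructor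
  · intro hxm
    have h4m : x ^ 2 ^ (4*m-1+1) = x := by
      rw [show 4*m-1+1 = m*4 by omega, pow_mul, pow_pow_eq_self_of_pow_eq_self hxm]
    exact (eq_zero_or_one_of_pow_two_pow_eq_self (hfix x) h4m).elim hx0 hx1
  · intro hy
    have hodd := CharTwo.pow_two_pow_of_sq_add_self_add_one_eq_zero hy (n := 4*m-1)
      ⟨2*m-1, by omega⟩
    rw [hfix] at hodd
    exact one_ne_zero (left_eq_add.mp hodd)
end

section
/- Let m be a positive integer, n = 4m-1, and d = 2^(2m-1) + 2^m + 1. Then the power function F(x) = x^d over F_{2^n} is 0-APN; that is, (x+1)^d + x^d + 1 = 0 has no solution x in F_{2^n} \ {0,1}. -/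
/-!
Adjoin a primitive cube root of unity `w`; it lies outside `𝔽_{2^n}` because `n = 4m - 1` is odd.
In the coordinate `r = (x + w) / (x + w²)` squaring acts as `r ↦ r⁻²`, so the equation
`(x + 1)^d + x^d + 1 = 0` becomes `r ^ (1 + (-2)^m + (-2)^(2m-1)) = 1`, while `x ^ 2^n = x` gives
`r ^ (1 - (-2)^n) = 1`. Every common divisor of the two exponents divides `3`, hence `r³ = 1`, so
`a = x + w` satisfies `a³ = (a + 1)³`, i.e. `a² + a + 1 = 0`, i.e. `x² + x = 0`.
-/

open Polynomial

theorem Int.dvd_three_of_dvd_one_sub_neg_two_pow {m : ℕ} (hm : 0 < m) {d : ℤ}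
    (hN : d ∣ 1 - (-2) ^ (4 * m - 1)) (hE : d ∣ 1 + (-2) ^ m + (-2) ^ (2 * m - 1)) :
    d ∣ 3 := by
  obtain ⟨k, rfl⟩ : ∃ k, m = k + 1 := ⟨m - 1, by omega⟩
  set v : ℤ := (-2) ^ k with hv
  have hN' : 1 - (-2) ^ (4 * (k + 1) - 1) = 1 + 8 * v ^ 4 := by
    rw [show 4 * (k + 1) - 1 = 4 * k + 3 by omega, hv]; ring
  have hE' : 1 + (-2) ^ (k + 1) + (-2) ^ (2 * (k + 1) - 1) = 1 - 2 * v - 2 * v ^ 2 := by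
    rw [show 2 * (k + 1) - 1 = 2 * k + 1 by omega, hv]; ring
  rw [hN'] at hN
  rw [hE'] at hE
  have h66 : d ∣ 22 * 3 := by
    rw [show (22 * 3 : ℤ) = (46 + 32 * v) * (1 + 8 * v ^ 4)
      + (128 * v ^ 3 + 56 * v ^ 2 + 8 * v + 20) * (1 - 2 * v - 2 * v ^ 2) by ring]
    exact dvd_add (hN.mul_left _) (hE.mul_left _)
  have hodd : ¬ 2 ∣ d := fun h => by
    obtain ⟨c, hc⟩ := h.trans hN
    omega
  -- `v` is a square mod 11 since `-2 ≡ 3 ^ 2`, and `1 - 2 y ^ 2 - 2 y ^ 4` has no root there.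
  have h11 : ¬ 11 ∣ d := fun h => by
    have hz : ((1 - 2 * v - 2 * v ^ 2 : ℤ) : ZMod 11) = 0 :=
      (ZMod.intCast_zmod_eq_zero_iff_dvd _ 11).mpr (h.trans hE)
    have hsq : ((v : ℤ) : ZMod 11) = (3 ^ k) ^ 2 := by
      rw [hv, ← pow_mul, mul_comm, pow_mul]; push_cast; rfl
    push_cast at hz
    rw [hsq] at hz
    exact (by decide : ∀ y : ZMod 11, 1 - 2 * y ^ 2 - 2 * y ^ 4 ≠ 0) (3 ^ k)
      (by linear_combination hz)
  have hcop : IsCoprime d 22 := by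
    have hp11 : Prime (11 : ℤ) := Int.prime_iff_natAbs_prime.mpr (by norm_num)
    rw [show (22 : ℤ) = 2 * 11 by norm_num]
    exact IsCoprime.mul_right ((Int.prime_two.irreducible.coprime_iff_not_dvd.mpr hodd).symm)
      ((hp11.irreducible.coprime_iff_not_dvd.mpr h11).symm)
  exact hcop.dvd_of_dvd_mul_left h66

section CharTwo

variable {L : Type*} [Field L] [CharP L 2]

theorem sq_add_self_add_one_ne_zero_of_pow_two_pow_eq_self {n : ℕ} (hn : Odd n) {y : L}
    (hy : y ^ 2 ^ n = y) : y ^ 2 + y + 1 ≠ 0 := by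
  intro h
  have h2 : (2 : L) = 0 := CharTwo.two_eq_zero
  have hy3 : y ^ 3 = 1 := by linear_combination (y - 1) * h
  obtain ⟨j, hj⟩ : 3 ∣ 2 ^ n + 1 := by simpa using Odd.nat_add_dvd_pow_add_pow 2 1 hn
  have hexp : 2 ^ n = 3 * (j - 1) + 2 := by generalize 2 ^ n = N at hj; omega
  have hy2 : y ^ 2 ^ n = y ^ 2 := by rw [hexp, pow_add, pow_mul, hy3, one_pow, one_mul]
  rw [hy] at hy2
  exact one_ne_zero (α := L) (by linear_combination h + hy2 - y * h2)

/-- For a primitive cube root of unity `w` we have `w + 1 = w ^ 2` in characteristic `2`, so this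
is the Möbius map `y ↦ (y + w) / (y + w ^ 2)`. -/
def cubeRootMobius (w y : L) : L := (y + w) / (y + w + 1)

variable {w : L}

theorem cubeRootMobius_sq (hw : w ^ 2 + w + 1 = 0) (y : L) :
    cubeRootMobius w (y ^ 2) = cubeRootMobius w y ^ (-2 : ℤ) := by
  have h2 : (2 : L) = 0 := CharTwo.two_eq_zero
  have hnum : (y + w + 1) ^ 2 = y ^ 2 + w := by linear_combination hw + (y * w + y) * h2
  have hden : (y + w) ^ 2 = y ^ 2 + w + 1 := by linear_combination hw + (y * w - w - 1) * h2
  rw [cubeRootMobius, cubeRootMobius, ← hden, ← hnum, zpow_neg, zpow_two, ← sq, div_pow,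
    inv_div]

theorem cubeRootMobius_pow_two_pow (hw : w ^ 2 + w + 1 = 0) (y : L) (k : ℕ) :
    cubeRootMobius w (y ^ 2 ^ k) = cubeRootMobius w y ^ ((-2 : ℤ) ^ k) := by
  induction k with
  | zero => simp
  | succ k ih => rw [pow_succ, pow_mul, cubeRootMobius_sq hw, ih, ← zpow_mul, pow_succ]

theorem add_mul_add_add_one (hw : w ^ 2 + w + 1 = 0) (y : L) :
    (y + w) * (y + w + 1) = y ^ 2 + y + 1 := by
  linear_combination hw + (y * w - 1) * (CharTwo.two_eq_zero : (2 : L) = 0)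

theorem cubeRootMobius_mul_mul_eq_one (hw : w ^ 2 + w + 1 = 0) {x : L}
    (hx : ∀ k, x ^ 2 ^ k + w + 1 ≠ 0) {s t : ℕ}
    (h : (x + 1) ^ (2 ^ s + 2 ^ t + 1) + x ^ (2 ^ s + 2 ^ t + 1) + 1 = 0) :
    cubeRootMobius w (x ^ 2 ^ s) * cubeRootMobius w (x ^ 2 ^ t) * cubeRootMobius w x = 1 := by
  have h2 : (2 : L) = 0 := CharTwo.two_eq_zero
  have hx0 : x + w + 1 ≠ 0 := by simpa using hx 0
  simp only [pow_add, pow_one, add_pow_char_pow, one_pow] at h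
  rw [cubeRootMobius, cubeRootMobius, cubeRootMobius, div_mul_div_comm, div_mul_div_comm,
    div_eq_one_iff_eq (mul_ne_zero (mul_ne_zero (hx s) (hx t)) hx0)]
  linear_combination -h - 3 * hw
    + (x ^ 2 ^ s * x ^ 2 ^ t * x - w * (x ^ 2 ^ s + x ^ 2 ^ t + x) + 2) * h2

theorem pow_eq_one_of_zpow_eq_one_of_forall_dvd {G₀ : Type*} [GroupWithZero G₀] {r : G₀}
    (hr : r ≠ 0) {a b : ℤ} {c : ℕ} (hab : ∀ d : ℤ, d ∣ a → d ∣ b → d ∣ c)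
    (ha : r ^ a = 1) (hb : r ^ b = 1) : r ^ c = 1 := by
  set u := Units.mk0 r hr
  have hu : ∀ e : ℤ, r ^ e = 1 → (orderOf u : ℤ) ∣ e := fun e he =>
    orderOf_dvd_iff_zpow_eq_one.mpr (Units.ext (by simpa [u] using he))
  have huc : u ^ c = 1 :=
    orderOf_dvd_iff_pow_eq_one.mp (by exact_mod_cast hab _ (hu a ha) (hu b hb))
  simpa [u] using congrArg Units.val huc

theorem zero_apn_of_pow_two_pow_eq_self (hw : w ^ 2 + w + 1 = 0) {m : ℕ} (hm : 0 < m) {x : L}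
    (hx : x ^ 2 ^ (4 * m - 1) = x) (hx0 : x ≠ 0) (hx1 : x ≠ 1) :
    (x + 1) ^ (2 ^ (2 * m - 1) + 2 ^ m + 1) + x ^ (2 ^ (2 * m - 1) + 2 ^ m + 1) + 1 ≠ 0 := by
  intro h
  have h2 : (2 : L) = 0 := CharTwo.two_eq_zero
  have hfix : ∀ k, (x ^ 2 ^ k) ^ 2 ^ (4 * m - 1) = x ^ 2 ^ k := fun k => by
    rw [← pow_mul, mul_comm, pow_mul, hx]
  have hne : ∀ k, x ^ 2 ^ k + w ≠ 0 ∧ x ^ 2 ^ k + w + 1 ≠ 0 := fun k => by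
    rw [← mul_ne_zero_iff, add_mul_add_add_one hw]
    exact sq_add_self_add_one_ne_zero_of_pow_two_pow_eq_self ⟨2 * m - 1, by omega⟩ (hfix k)
  obtain ⟨hxw, hxw1⟩ : x + w ≠ 0 ∧ x + w + 1 ≠ 0 := by simpa using hne 0
  set r := cubeRootMobius w x with hr_def
  have hr : r ≠ 0 := div_ne_zero hxw hxw1
  have hN : r ^ (1 - (-2 : ℤ) ^ (4 * m - 1)) = 1 := by
    rw [zpow_sub₀ hr, zpow_one, ← cubeRootMobius_pow_two_pow hw, hx, div_self hr]
  have hE : r ^ (1 + (-2 : ℤ) ^ m + (-2) ^ (2 * m - 1)) = 1 := by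
    have := cubeRootMobius_mul_mul_eq_one hw (fun k => (hne k).2) h
    rw [cubeRootMobius_pow_two_pow hw, cubeRootMobius_pow_two_pow hw] at this
    rw [zpow_add₀ hr, zpow_add₀ hr, zpow_one]
    linear_combination this
  have h3 : r ^ 3 = 1 := pow_eq_one_of_zpow_eq_one_of_forall_dvd hr
    (fun _ => Int.dvd_three_of_dvd_one_sub_neg_two_pow hm) hN hE
  have hcube : (x + w) ^ 3 = (x + w + 1) ^ 3 := by
    rwa [hr_def, cubeRootMobius, div_pow, div_eq_one_iff_eq (pow_ne_zero 3 hxw1)] at h3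
  have hx01 : x * (x + 1) = 0 := by
    linear_combination -hcube - hw - (x * w + (x + w) ^ 2 + (x + w)) * h2
  rcases mul_eq_zero.mp hx01 with h0 | h1
  · exact hx0 h0
  · exact hx1 (by linear_combination h1 - h2)

end CharTwo

theorem zero_apn_8 (m : ℕ) (hm : 0 < m) 
    (x : GaloisField 2 (4*m-1)) (hx0 : x ≠ 0) (hx1 : x ≠ 1) :
    (x + 1) ^ (2^(2*m-1)+2^m+1) + x ^ (2^(2*m-1)+2^m+1) + 1 ≠ 0 := by
  let K := GaloisField 2 (4 * m - 1)
  let L := AlgebraicClosure K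
  have : Fintype K := Fintype.ofFinite K
  have hcard : Fintype.card K = 2 ^ (4 * m - 1) := by
    rw [← Nat.card_eq_fintype_card]; exact GaloisField.card 2 _ (by omega)
  obtain ⟨w, hw⟩ := IsAlgClosed.exists_root (X ^ 2 + X + 1 : L[X])
    (by rw [show (X ^ 2 + X + 1 : L[X]).degree = 2 by compute_degree!]; decide)
  refine fun h => zero_apn_of_pow_two_pow_eq_self (w := w) (by simpa using hw) hm
    (x := algebraMap K L x) ?_ (by simpa using hx0) (by simpa using hx1) ?_
  · rw [← map_pow, ← hcard, FiniteField.pow_card]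
  · simpa using congrArg (algebraMap K L) h
end

section
/- Let m be a positive integer, n = 4m-1, and d = 3(2^(2m+1) - 1). Then the power function F(x) = x^d over F_{2^n} is 0-APN; that is, (x+1)^d + x^d + 1 = 0 has no solution x in F_{2^n} \ {0,1}. -/
/-!
Put `q = 2 ^ (2m + 1)`, so that `q ^ 2 = 8 · 2 ^ n` and `y ^ (q ^ 2) = y ^ 8` on `𝔽_{2^n}`.
Because `gcd (q + 1, 2 ^ n - 1) = 1`, a solution `x` can be written `x = w ^ (q + 1)` and
`x + 1 = v ^ (q + 1)`; then `x ^ d = w ^ 21`, `(x + 1) ^ d = v ^ 21`, and the equation becomes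
`v ^ 21 = w ^ 21 + 1`. Applying the Frobenius `y ↦ y ^ q`, which turns `x = w ^ (q + 1)` into
`x ^ q = w ^ 7 x`, gives two polynomial relations between `x` and `w ^ 7`. Eliminating `w ^ 7`
leaves `D(x) = 0` for an explicit `D ∈ 𝔽₂[x]` of degree 60 whose irreducible factors all have
degree 10: `D` divides `x ^ (2 ^ 10) - x` and is coprime to `x ^ (2 ^ 5) - x`. As `n` is odd,
`𝔽_{2^n} ∩ 𝔽_{2^10} ⊆ 𝔽_{2^5}`, a contradiction.
-/

open Function

theorem Nat.coprime_two_pow_add_one_two_pow_sub_one {k n : ℕ} (h : 2 * k = n + 3) :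
    Nat.Coprime (2 ^ k + 1) (2 ^ n - 1) := by
  have hsq : 2 ^ k + 1 ∣ 2 ^ (2 * k) - 1 :=
    ⟨2 ^ k - 1, by rw [pow_mul', ← one_pow 2, Nat.sq_sub_sq, one_pow]⟩
  have hgcd : Nat.gcd (2 * k) n ∣ 3 := by
    simpa [h] using Nat.dvd_sub (Nat.gcd_dvd_left (2 * k) n) (Nat.gcd_dvd_right (2 * k) n)
  have hdvd7 : Nat.gcd (2 ^ k + 1) (2 ^ n - 1) ∣ 7 :=
    calc _ ∣ Nat.gcd (2 ^ (2 * k) - 1) (2 ^ n - 1) := Nat.gcd_dvd_gcd_of_dvd_left _ hsq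
      _ = 2 ^ Nat.gcd (2 * k) n - 1 := Nat.pow_sub_one_gcd_pow_sub_one 2 _ _
      _ ∣ 2 ^ 3 - 1 := Nat.pow_sub_one_dvd_pow_sub_one 2 hgcd
  have h7 : ¬ 7 ∣ 2 ^ k + 1 := by
    rw [Nat.dvd_iff_mod_eq_zero, ← Nat.div_add_mod k 3, pow_add, pow_mul]
    have : k % 3 < 3 := Nat.mod_lt _ (by norm_num)
    interval_cases k % 3 <;> simp [Nat.add_mod, Nat.mul_mod, Nat.pow_mod]
  rcases (Nat.dvd_prime (by norm_num : Nat.Prime 7)).1 hdvd7 with hg1 | hg7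
  · exact hg1
  · exact absurd (hg7 ▸ Nat.gcd_dvd_left _ _) h7

theorem pow_pow_eq_self_of_gcd_dvd {M : Type*} [Monoid M] {x : M} {p a b c : ℕ}
    (ha : x ^ p ^ a = x) (hb : x ^ p ^ b = x) (hc : a.gcd b ∣ c) : x ^ p ^ c = x := by
  have hper (j : ℕ) : IsPeriodicPt (· ^ p) j x ↔ x ^ p ^ j = x := by
    rw [IsPeriodicPt, IsFixedPt, pow_iterate]
  rw [← hper] at ha hb ⊢
  exact (ha.gcd hb).trans_dvd hc

theorem exists_pow_eq_of_coprime {G₀ : Type*} [GroupWithZero G₀] [Finite G₀] {e : ℕ}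
    (he : (Nat.card G₀ - 1).Coprime e) {y : G₀} (hy : y ≠ 0) :
    ∃ w : G₀, w ≠ 0 ∧ w ^ e = y := by
  obtain ⟨u, hu⟩ :=
    (Nat.Coprime.pow_left_bijective (by rwa [Nat.card_units])).2 (Units.mk0 y hy)
  exact ⟨u, u.ne_zero, by simpa using congrArg Units.val hu⟩

theorem GaloisField.pow_card {p : ℕ} [Fact p.Prime] {n : ℕ} (hn : n ≠ 0)
    (a : GaloisField p n) : a ^ p ^ n = a := by
  have := Fintype.ofFinite (GaloisField p n)
  rw [← GaloisField.card p n hn, Nat.card_eq_fintype_card]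
  exact FiniteField.pow_card a

theorem pow_succ_pow_three_mul_pred {G₀ : Type*} [GroupWithZero G₀] {w : G₀} (hw : w ≠ 0)
    {q : ℕ} (hq0 : q ≠ 0) (hq : (w ^ q) ^ q = w ^ 8) :
    (w ^ (q + 1)) ^ (3 * (q - 1)) = w ^ 21 := by
  refine mul_right_cancel₀ (pow_ne_zero 3 hw) ?_
  obtain ⟨r, rfl⟩ := Nat.exists_eq_succ_of_ne_zero hq0
  calc (w ^ (r + 1 + 1)) ^ (3 * (r + 1 - 1)) * w ^ 3 = w ^ ((r + 1) * (r + 1) * 3) := by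
        rw [← pow_mul, ← pow_add, Nat.add_sub_cancel]; ring_nf
    _ = w ^ 21 * w ^ 3 := by rw [pow_mul, pow_mul, hq, ← pow_mul, ← pow_add]

theorem pow_eq_pow_seven_mul {M : Type*} [CommMonoid M] {w x : M} {q : ℕ} (hw : w ^ (q + 1) = x)
    (hq : (w ^ q) ^ q = w ^ 8) : x ^ q = w ^ 7 * x := by
  rw [← hw, pow_succ, mul_pow, hq, pow_succ w 7]
  ac_rfl

theorem sq_add_mul_mul_add_mul_sq_eq_zero {R : Type*} [CommRing R] {A B s e c : R}
    (hB : A * s = B) (hs : s ^ 2 + e * s + c = 0) : B ^ 2 + e * A * B + c * A ^ 2 = 0 := by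
  linear_combination A ^ 2 * hs - (B + A * s + e * A) * hB

-- Up to the factor `x ^ 7 * (x + 1) ^ 7`, the resultant in `s` of the two relations in
-- `resultantFactor_mul_eq_zero` (after eliminating `z`).
def resultantFactor {R : Type*} [Semiring R] (x : R) : R :=
  x ^ 60 + x ^ 58 + x ^ 53 + x ^ 52 + x ^ 51 + x ^ 49 + x ^ 48 + x ^ 45 + x ^ 44 + x ^ 43 + x ^ 41 +
  x ^ 40 + x ^ 37 + x ^ 36 + x ^ 35 + x ^ 34 + x ^ 32 + x ^ 30 + x ^ 28 + x ^ 26 + x ^ 25 + x ^ 24 +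
  x ^ 23 + x ^ 20 + x ^ 19 + x ^ 17 + x ^ 16 + x ^ 15 + x ^ 12 + x ^ 11 + x ^ 9 + x ^ 8 + x ^ 7 +
  x ^ 2 + 1

section CharTwo

variable {R : Type*} [CommRing R] [CharP R 2]

theorem frobenius_relations {x w v : R} {k : ℕ} (hw : w ^ (2 ^ k + 1) = x)
    (hv : v ^ (2 ^ k + 1) = x + 1) (hwk : (w ^ 2 ^ k) ^ 2 ^ k = w ^ 8)
    (hvk : (v ^ 2 ^ k) ^ 2 ^ k = v ^ 8) (h21 : v ^ 21 = w ^ 21 + 1) :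
    (x * w ^ 7) ^ 2 + x * w ^ 7 = (x ^ 2 + x + 1) * (w ^ 21 + x) ∧
      (w ^ 21) ^ 2 + ((x + 1) ^ 21 + x ^ 21 + 1) * w ^ 21 + x ^ 21 = 0 := by
  have hlin : v ^ 7 * (x + 1) = w ^ 7 * x + 1 := by
    rw [← pow_eq_pow_seven_mul hv hvk, ← pow_eq_pow_seven_mul hw hwk, add_pow_char_pow, one_pow]
  have hfrob : (v ^ 2 ^ k) ^ 21 = (w ^ 2 ^ k) ^ 21 + 1 := by
    rw [pow_right_comm, h21, add_pow_char_pow, one_pow, pow_right_comm]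
  have hx : x ^ 21 = (w ^ 2 ^ k) ^ 21 * w ^ 21 := by rw [← hw]; ring
  have hx1 : (x + 1) ^ 21 = (v ^ 2 ^ k) ^ 21 * v ^ 21 := by rw [← hv]; ring
  constructor
  · linear_combination (norm := (ring_nf; reduce_mod_char!))
      congrArg (· ^ 3) hlin + (x + 1) ^ 3 * h21
  · linear_combination (norm := (ring_nf; reduce_mod_char!))
      (1 + w ^ 21) * hx + w ^ 21 * hx1 + w ^ 21 * (v ^ 2 ^ k) ^ 21 * h21 +
        w ^ 21 * (w ^ 21 + 1) * hfrob

theorem artinSchreier_cube_relation {z c : R} (hz : z ^ 2 + z = c) :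
    (z ^ 3 + c) ^ 2 + (z ^ 3 + c) * (1 + c) + c * (1 + c) ^ 2 = 0 := by
  linear_combination (norm := (ring_nf; reduce_mod_char!))
    ((1 + c) ^ 2 + (z + 1) * ((z + 1) * (z ^ 2 + z + c) + 1 + c)) * hz

theorem resultantFactor_mul_eq_zero {x z s : R} (hz : z ^ 2 + z = (x ^ 2 + x + 1) * (s + x))
    (hz3 : z ^ 3 = x ^ 3 * s) (hs : s ^ 2 + ((x + 1) ^ 21 + x ^ 21 + 1) * s + x ^ 21 = 0) :
    x ^ 7 * (x + 1) ^ 7 * resultantFactor x = 0 := by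
  have hG := artinSchreier_cube_relation hz
  rw [hz3] at hG
  -- the remainder of the cubic `hG` on division by the quadratic `hs`, as polynomials in `s`
  have hlin :
      (x ^ 46 + x ^ 45 + x ^ 43 + x ^ 41 + x ^ 39 + x ^ 38 + x ^ 34 + x ^ 33 + x ^ 32 + x ^ 26 +
       x ^ 25 + x ^ 22 + x ^ 21 + x ^ 20 + x ^ 17 + x ^ 16 + x ^ 15 + x ^ 14 + x ^ 12 + x ^ 11 +
       x ^ 8 + x ^ 2) * s =
        x ^ 47 + x ^ 46 + x ^ 40 + x ^ 39 + x ^ 37 + x ^ 32 + x ^ 30 + x ^ 29 + x ^ 28 + x ^ 26 +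
        x ^ 24 + x ^ 9 + x ^ 8 + x ^ 6 + x ^ 4 + x ^ 3 := by
    linear_combination (norm := (ring_nf; reduce_mod_char!))
      hG + ((x ^ 6 + x ^ 5 + x ^ 3 + x + 1) * s +
        x ^ 26 + x ^ 25 + x ^ 19 + x ^ 18 + x ^ 16 + x ^ 11 + x ^ 9 + x ^ 8 + x ^ 7 + x ^ 5 +
        x ^ 3) * hs
  unfold resultantFactor
  linear_combination (norm := (ring_nf; reduce_mod_char!))
    sq_add_mul_mul_add_mul_sq_eq_zero hlin hs

theorem pow_two_pow_ten_of_resultantFactor {x : R} (hD : resultantFactor x = 0) :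
    x ^ 2 ^ 10 = x := by
  unfold resultantFactor at hD
  -- the remainders of the successive squares `x ^ 2 ^ j` modulo `resultantFactor x`
  have h6 : x ^ 2 ^ 6 =
      x ^ 58 + x ^ 57 + x ^ 56 + x ^ 54 + x ^ 53 + x ^ 50 + x ^ 46 + x ^ 45 + x ^ 42 + x ^ 36 +
      x ^ 35 + x ^ 34 + x ^ 32 + x ^ 30 + x ^ 29 + x ^ 28 + x ^ 22 + x ^ 19 + x ^ 18 + x ^ 14 +
      x ^ 11 + x ^ 10 + x ^ 8 + x ^ 7 + x ^ 6 + 1 := by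
    linear_combination (norm := (ring_nf; reduce_mod_char!)) (x ^ 4 + x ^ 2 + 1) * hD
  have h7 : x ^ 2 ^ 7 =
      x ^ 50 + x ^ 49 + x ^ 46 + x ^ 45 + x ^ 44 + x ^ 43 + x ^ 39 + x ^ 38 + x ^ 37 + x ^ 36 +
      x ^ 35 + x ^ 33 + x ^ 26 + x ^ 25 + x ^ 18 + x ^ 17 + x ^ 16 + x ^ 15 + x ^ 14 + x ^ 13 +
      x ^ 12 + x ^ 11 + x ^ 10 + x ^ 7 + x ^ 6 + x ^ 5 + x ^ 2 + 1 := by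
    linear_combination (norm := (ring_nf; reduce_mod_char!)) congrArg (· ^ 2) h6 +
      (x ^ 56 + x ^ 52 + x ^ 50 + x ^ 49 + x ^ 48 + x ^ 41 + x ^ 40 + x ^ 38 + x ^ 34 + x ^ 33 +
       x ^ 25 + x ^ 24 + x ^ 22 + x ^ 16 + x ^ 9 + x ^ 5 + x ^ 4 + x ^ 2) * hD
  have h8 : x ^ 2 ^ 8 =
      x ^ 46 + x ^ 45 + x ^ 43 + x ^ 42 + x ^ 40 + x ^ 39 + x ^ 38 + x ^ 35 + x ^ 32 + x ^ 26 +
      x ^ 25 + x ^ 22 + x ^ 21 + x ^ 15 + x ^ 13 + x ^ 12 + x ^ 11 + x ^ 9 + x ^ 7 + x ^ 6 + x ^ 5 +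
      x ^ 4 + x ^ 2 + 1 := by
    linear_combination (norm := (ring_nf; reduce_mod_char!)) congrArg (· ^ 2) h7 +
      (x ^ 40 + x ^ 33 + x ^ 30 + x ^ 29 + x ^ 28 + x ^ 27 + x ^ 26 + x ^ 25 + x ^ 24 + x ^ 23 +
       x ^ 18 + x ^ 17 + x ^ 16 + x ^ 15 + x ^ 14 + x ^ 13 + x ^ 11 + x ^ 5 + x ^ 4 + x ^ 2) * hD
  have h9 : x ^ 2 ^ 9 =
      x ^ 58 + x ^ 57 + x ^ 54 + x ^ 53 + x ^ 52 + x ^ 49 + x ^ 46 + x ^ 45 + x ^ 44 + x ^ 41 +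
      x ^ 40 + x ^ 38 + x ^ 37 + x ^ 36 + x ^ 34 + x ^ 33 + x ^ 32 + x ^ 30 + x ^ 29 + x ^ 22 +
      x ^ 20 + x ^ 18 + x ^ 17 + x ^ 16 + x ^ 14 + x ^ 12 + x ^ 10 + x ^ 5 + x ^ 4 + x ^ 2 +
      x := by
    linear_combination (norm := (ring_nf; reduce_mod_char!)) congrArg (· ^ 2) h8 +
      (x ^ 32 + x ^ 26 + x ^ 25 + x ^ 24 + x ^ 22 + x ^ 21 + x ^ 20 + x ^ 11 + x ^ 10 + x ^ 9 +
       x ^ 8 + x ^ 7 + x ^ 3 + x + 1) * hD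
  linear_combination (norm := (ring_nf; reduce_mod_char!)) congrArg (· ^ 2) h9 +
    (x ^ 56 + x ^ 49 + x ^ 46 + x ^ 45 + x ^ 44 + x ^ 43 + x ^ 41 + x ^ 39 + x ^ 35 + x ^ 34 +
     x ^ 30 + x ^ 29 + x ^ 27 + x ^ 24 + x ^ 23 + x ^ 21 + x ^ 19 + x ^ 18 + x ^ 16 + x ^ 14 +
     x ^ 12 + x ^ 11 + x ^ 9 + x ^ 7 + x ^ 5 + x ^ 3 + x ^ 2 + x) * hD

theorem resultantFactor_ne_zero_of_pow_two_pow_five [Nontrivial R] {x : R} (h : x ^ 2 ^ 5 = x) :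
    resultantFactor x ≠ 0 := by
  intro hD
  unfold resultantFactor at hD
  apply one_ne_zero (α := R)
  -- a Bézout identity between `resultantFactor` and `x ^ 32 - x` in `𝔽₂[x]`
  linear_combination (norm := (ring_nf; reduce_mod_char!))
    (x ^ 30 + x ^ 29 + x ^ 28 + x ^ 27 + x ^ 23 + x ^ 22 + x ^ 21 + x ^ 18 + x ^ 15 + x ^ 12 +
     x ^ 11 + x ^ 10 + x ^ 6 + x ^ 5 + x ^ 4 + x ^ 3 + x ^ 2 + x + 1) * hD +
    (x ^ 58 + x ^ 57 + x ^ 54 + x ^ 53 + x ^ 50 + x ^ 49 + x ^ 43 + x ^ 42 + x ^ 39 + x ^ 37 +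
     x ^ 36 + x ^ 33 + x ^ 32 + x ^ 27 + x ^ 25 + x ^ 23 + x ^ 22 + x ^ 18 + x ^ 17 + x ^ 16 +
     x ^ 14 + x ^ 13 + x ^ 11 + x ^ 10 + x ^ 8 + x ^ 7 + 1) * h

end CharTwo

theorem zero_apn_10 (m : ℕ) (hm : 0 < m) 
    (x : GaloisField 2 (4*m-1)) (hx0 : x ≠ 0) (hx1 : x ≠ 1) :
    (x + 1) ^ (3*(2^(2*m+1)-1)) + x ^ (3*(2^(2*m+1)-1)) + 1 ≠ 0 := by
  intro hEq
  have hn : 4 * m - 1 ≠ 0 := by omega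
  have hq (y : GaloisField 2 (4 * m - 1)) : (y ^ 2 ^ (2 * m + 1)) ^ 2 ^ (2 * m + 1) = y ^ 8 := by
    rw [← pow_mul, ← pow_add, show 2 * m + 1 + (2 * m + 1) = 4 * m - 1 + 3 by omega, pow_add,
      pow_mul, GaloisField.pow_card hn]
    norm_num
  have hcop : (Nat.card (GaloisField 2 (4 * m - 1)) - 1).Coprime (2 ^ (2 * m + 1) + 1) := by
    rw [GaloisField.card 2 _ hn]
    exact (Nat.coprime_two_pow_add_one_two_pow_sub_one (by omega)).symm
  have hx1' : x + 1 ≠ 0 := fun h ↦ hx1 (CharTwo.add_eq_zero.1 h)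
  obtain ⟨w, hw0, hw⟩ := exists_pow_eq_of_coprime hcop hx0
  obtain ⟨v, hv0, hv⟩ := exists_pow_eq_of_coprime hcop hx1'
  have h21 : v ^ 21 = w ^ 21 + 1 := by
    rw [← hv, ← hw, pow_succ_pow_three_mul_pred hv0 (by positivity) (hq v),
      pow_succ_pow_three_mul_pred hw0 (by positivity) (hq w), add_assoc] at hEq
    exact CharTwo.add_eq_zero.1 hEq
  obtain ⟨hz, hs⟩ := frobenius_relations hw hv (hq w) (hq v) h21
  have hD : resultantFactor x = 0 :=
    (mul_eq_zero.1 (resultantFactor_mul_eq_zero hz (by ring) hs)).resolve_left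
      (mul_ne_zero (pow_ne_zero _ hx0) (pow_ne_zero _ hx1'))
  have hgcd : Nat.gcd 10 (4 * m - 1) ∣ 5 := by
    have hodd : Nat.Coprime 2 (4 * m - 1) := Nat.coprime_two_left.2 ⟨2 * m - 1, by omega⟩
    rw [show 10 = 2 * 5 by rfl, Nat.Coprime.gcd_mul_left_cancel 5 hodd]
    exact Nat.gcd_dvd_left 5 _
  exact resultantFactor_ne_zero_of_pow_two_pow_five
    (pow_pow_eq_self_of_gcd_dvd (pow_two_pow_ten_of_resultantFactor hD)
      (GaloisField.pow_card hn x) hgcd) hD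
end

section
/- Let m be a positive integer with m not congruent to 13 modulo 53, let n = 4m+1, and let d = 2^(2m+1) + 2^(m-1) + 1. Then the power function F(x) = x^d over F_{2^n} is 0-APN; that is, (x+1)^d + x^d + 1 = 0 has no solution x in F_{2^n} \ {0,1}. -/
/-!
For `n` odd, `X² + X + 1` has no root in `𝔽_{2^n}`; adjoin one, `ω`, and for `x ∈ 𝔽_{2^n}` put
`g = (x + ω) / (x + ω²)`. Squaring swaps `ω` and `ω²`, so
`(x^{2^e} + ω) / (x^{2^e} + ω²) = g^{(-2)^e}`; in particular `x^{2^n} = x` gives `g^{2^n+1} = 1`.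
For `d = 2^i + 2^j + 1` the equation `(x+1)^d + x^d + 1 = 0` says
`∏ (x^{2^e} + ω) = ∏ (x^{2^e} + ω²)` over `e ∈ {0, i, j}`, that is `g^{1 + (-2)^i + (-2)^j} = 1`.
Hence `g^3 = 1` as soon as `gcd(2^n + 1, 1 + (-2)^i + (-2)^j)` divides `3`, and `g^3 = 1` forces
`x² = x`. For `n = 4m + 1`, `i = 2m + 1`, `j = m - 1` that gcd divides `3 · 107`, and `107`
divides `2^n + 1` only when `53 ∣ n`, i.e. `m ≡ 13 (mod 53)`.
-/

open Polynomial

theorem pow_intGcd_eq_one {G : Type*} [DivisionMonoid G] {a : G} {m n : ℤ} (hm : a ^ m = 1)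
    (hn : a ^ n = 1) : a ^ Int.gcd m n = 1 := by
  have natAbs_eq_one (k : ℤ) (h : a ^ k = 1) : a ^ k.natAbs = 1 := by
    rcases k with k | k <;> simpa using h
  exact pow_gcd_eq_one.mpr ⟨natAbs_eq_one m hm, natAbs_eq_one n hn⟩

theorem IsAlgClosed.exists_sq_add_add_one_eq_zero (L : Type*) [Field L] [IsAlgClosed L] :
    ∃ ω : L, ω ^ 2 + ω + 1 = 0 := by
  have hdeg : (X ^ 2 + X + 1 : L[X]).degree = 2 := by compute_degree!
  obtain ⟨ω, hω⟩ := IsAlgClosed.exists_root _ (by rw [hdeg]; decide)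
  exact ⟨ω, by simpa using hω⟩

section CubeRootOfUnity

variable {L : Type*} [Field L] [CharP L 2] {ω : L}

theorem add_root_mul_add_root_sq (hω : ω ^ 2 + ω + 1 = 0) (b : L) :
    (b + ω) * (b + ω ^ 2) = b ^ 2 + b + 1 := by
  linear_combination (b + ω - 1) * hω - b * CharTwo.two_eq_zero (R := L)

theorem sq_add_root_div (hω : ω ^ 2 + ω + 1 = 0) (c : L) :
    (c ^ 2 + ω) / (c ^ 2 + ω ^ 2) = ((c + ω) / (c + ω ^ 2)) ^ (-2 : ℤ) := by
  have h1 : c ^ 2 + ω = (c + ω ^ 2) ^ 2 := by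
    linear_combination (-ω ^ 2 + ω - 2 * c) * hω + (c + c * ω) * CharTwo.two_eq_zero (R := L)
  have h2 : c ^ 2 + ω ^ 2 = (c + ω) ^ 2 := by
    linear_combination (-c * ω) * CharTwo.two_eq_zero (R := L)
  rw [h1, h2, ← div_pow, ← inv_div, inv_pow, zpow_neg]
  norm_cast

theorem two_pow_add_root_div (hω : ω ^ 2 + ω + 1 = 0) (c : L) (e : ℕ) :
    (c ^ 2 ^ e + ω) / (c ^ 2 ^ e + ω ^ 2) = ((c + ω) / (c + ω ^ 2)) ^ ((-2 : ℤ) ^ e) := by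
  induction e with
  | zero => simp
  | succ e ih => rw [pow_succ 2 e, pow_mul, sq_add_root_div hω, ih, ← zpow_mul, ← pow_succ]

theorem add_root_prod_eq_of_add_one_pow_add_pow_add_one_eq_zero (hω : ω ^ 2 + ω + 1 = 0)
    {a : L} {i j : ℕ} (h : (a + 1) ^ (2 ^ i + 2 ^ j + 1) + a ^ (2 ^ i + 2 ^ j + 1) + 1 = 0) :
    (a + ω) * (a ^ 2 ^ i + ω) * (a ^ 2 ^ j + ω) =
      (a + ω ^ 2) * (a ^ 2 ^ i + ω ^ 2) * (a ^ 2 ^ j + ω ^ 2) := by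
  simp only [pow_add, pow_one, add_pow_char_pow, one_pow] at h
  set p := a ^ 2 ^ i
  set q := a ^ 2 ^ j
  linear_combination h
    + (a * p + a * q + p * q + (1 + ω ^ 2 - ω) * (a + p + q) + (ω - 1) * (ω ^ 3 + 2)) * hω
    - (a * p + a * q + p * q + a + p + q + (a + ω ^ 2) * (p + ω ^ 2) * (q + ω ^ 2))
      * CharTwo.two_eq_zero (R := L)

theorem mul_add_one_eq_zero_of_add_root_pow_three (hω : ω ^ 2 + ω + 1 = 0) {b : L}
    (h : (b + ω) ^ 3 = (b + ω ^ 2) ^ 3) : b * (b + 1) = 0 := by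
  linear_combination h + (-ω ^ 3 + ω ^ 4 - 3 * b - 3 * b * ω + 3 * b * ω ^ 2 + 3 * b ^ 2) * hω
      + (2 * b + 3 * b * ω - b ^ 2 - 3 * b ^ 2 * ω) * CharTwo.two_eq_zero (R := L)

end CubeRootOfUnity

section OddDegree

variable {K : Type*} [Field K] [Fintype K] [CharP K 2] {n : ℕ}

theorem sq_add_add_one_ne_zero (hn : Odd n) (hK : Fintype.card K = 2 ^ n) (y : K) :
    y ^ 2 + y + 1 ≠ 0 := by
  intro h
  have hcube : y ^ 3 = 1 := by linear_combination (y - 1) * h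
  have hmod : 2 ^ n % 3 = 2 := by
    obtain ⟨q, rfl⟩ := hn
    rw [pow_succ, pow_mul, Nat.mul_mod, Nat.pow_mod]
    norm_num
  have hsq : y ^ 2 = y := by rw [← hmod, ← pow_eq_pow_mod _ hcube, ← hK, FiniteField.pow_card]
  exact one_ne_zero (by linear_combination h - hsq - y * CharTwo.two_eq_zero (R := K) : (1 : K) = 0)

theorem add_one_pow_add_pow_add_one_ne_zero (hn : Odd n) (hK : Fintype.card K = 2 ^ n) {i j : ℕ}
    (hgcd : Int.gcd (2 ^ n + 1) (1 + (-2) ^ i + (-2) ^ j) ∣ 3) {x : K} (hx0 : x ≠ 0)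
    (hx1 : x ≠ 1) : (x + 1) ^ (2 ^ i + 2 ^ j + 1) + x ^ (2 ^ i + 2 ^ j + 1) + 1 ≠ 0 := by
  intro hx
  obtain ⟨ω, hω⟩ := IsAlgClosed.exists_sq_add_add_one_eq_zero (AlgebraicClosure K)
  set φ := algebraMap K (AlgebraicClosure K)
  have hroot : ∀ y : K, φ y + ω ≠ 0 ∧ φ y + ω ^ 2 ≠ 0 := fun y => by
    have := (map_ne_zero φ).mpr (sq_add_add_one_ne_zero hn hK y)
    rw [map_add, map_add, map_pow, map_one, ← add_root_mul_add_root_sq hω] at this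
    exact mul_ne_zero_iff.mp this
  have hconj (e : ℕ) : φ x ^ 2 ^ e + ω ^ 2 ≠ 0 := by rw [← map_pow]; exact (hroot _).2
  set g := (φ x + ω) / (φ x + ω ^ 2)
  have hg0 : g ≠ 0 := div_ne_zero (hroot x).1 (hroot x).2
  have hfrob (e : ℕ) : (φ x ^ 2 ^ e + ω) / (φ x ^ 2 ^ e + ω ^ 2) = g ^ ((-2 : ℤ) ^ e) :=
    two_pow_add_root_div hω (φ x) e
  have hA : g ^ (2 ^ n + 1 : ℤ) = 1 := by
    have h := hfrob n
    rw [← map_pow, ← hK, FiniteField.pow_card, Odd.neg_pow hn, zpow_neg] at h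
    rw [zpow_add_one₀ hg0, mul_eq_one_iff_inv_eq₀ (zpow_ne_zero _ hg0)]
    exact h.symm
  have hB : g ^ (1 + (-2) ^ i + (-2) ^ j : ℤ) = 1 := by
    rw [zpow_add₀ hg0, zpow_add₀ hg0, zpow_one, ← hfrob i, ← hfrob j, div_mul_div_comm,
      div_mul_div_comm,
      div_eq_one_iff_eq (mul_ne_zero (mul_ne_zero (hroot x).2 (hconj i)) (hconj j))]
    exact add_root_prod_eq_of_add_one_pow_add_pow_add_one_eq_zero hω
      (by simpa using congrArg φ hx)
  have hg3 : g ^ 3 = 1 := by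
    obtain ⟨c, hc⟩ := hgcd
    rw [hc, pow_mul, pow_intGcd_eq_one hA hB, one_pow]
  have hx01 : φ (x * (x + 1)) = 0 := by
    rw [div_pow, div_eq_one_iff_eq (pow_ne_zero _ (hroot x).2)] at hg3
    simpa using mul_add_one_eq_zero_of_add_root_pow_three hω hg3
  rcases mul_eq_zero.mp ((map_eq_zero φ).mp hx01) with h | h
  · exact hx0 h
  · exact hx1 (by linear_combination h - CharTwo.two_eq_zero (R := K))

end OddDegree

theorem orderOf_two_zmod_107 : orderOf (2 : ZMod 107) = 106 := by
  refine orderOf_eq_of_pow_and_pow_div_prime (by norm_num) (by reduce_mod_char) fun p hp hdvd => ?_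
  rcases (Nat.Prime.dvd_mul hp).mp (show p ∣ 2 * 53 from hdvd) with h | h
  · rw [(Nat.prime_dvd_prime_iff_eq hp Nat.prime_two).mp h]; decide
  · rw [(Nat.prime_dvd_prime_iff_eq hp (by norm_num)).mp h]; decide

theorem mod_53_eq_13_of_107_dvd {m : ℕ} (h : (107 : ℤ) ∣ 2 ^ (4 * m + 1) + 1) :
    m % 53 = 13 := by
  have hneg : (2 : ZMod 107) ^ (4 * m + 1) = -1 := by
    have := (ZMod.intCast_zmod_eq_zero_iff_dvd _ 107).mpr h
    push_cast at this
    linear_combination this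
  have hone : (2 : ZMod 107) ^ (2 * (4 * m + 1)) = 1 := by
    rw [mul_comm, pow_mul, hneg]; norm_num
  have := orderOf_dvd_of_pow_eq_one hone
  rw [orderOf_two_zmod_107] at this
  omega

theorem int_gcd_dvd_321 {m : ℕ} (hm : 0 < m) :
    Int.gcd (2 ^ (4 * m + 1) + 1) (1 + (-2) ^ (2 * m + 1) + (-2) ^ (m - 1)) ∣ 321 := by
  obtain ⟨k, rfl⟩ : ∃ k, m = k + 1 := ⟨m - 1, by omega⟩
  set d := Int.gcd (2 ^ (4 * (k + 1) + 1) + 1) (1 + (-2) ^ (2 * (k + 1) + 1) + (-2) ^ (k + 1 - 1))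
  have hpow : (2 : ZMod d) ^ (4 * k + 5) + 1 = 0 := by
    have := (ZMod.intCast_zmod_eq_zero_iff_dvd _ d).mpr (Int.gcd_dvd_left _ _)
    push_cast at this
    rwa [show 4 * (k + 1) + 1 = 4 * k + 5 by ring] at this
  have hsum : (1 : ZMod d) + (-2) ^ (2 * k + 3) + (-2) ^ k = 0 := by
    have := (ZMod.intCast_zmod_eq_zero_iff_dvd _ d).mpr (Int.gcd_dvd_right _ _)
    push_cast at this
    exact this
  set S : ZMod d := (-2) ^ (k + 1)
  have hquad : 4 * S ^ 2 + S - 2 = 0 := by linear_combination (-2) * hsum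
  have hquart : 2 * S ^ 4 + 1 = 0 := by
    have := Odd.neg_pow (⟨2 * k + 2, by ring⟩ : Odd (4 * k + 5)) (2 : ZMod d)
    linear_combination hpow - this
  -- `642 = 2 * 321` is the resultant of the two polynomials in `S`, and `2` is a unit by `hquart`
  have h321 : (321 : ZMod d) = 0 := by
    linear_combination (321 - S ^ 4 * (434 + 136 * S)) * hquart
      - S ^ 4 * (-104 + 16 * S - 200 * S ^ 2 - 68 * S ^ 3) * hquad
  exact (ZMod.natCast_eq_zero_iff 321 d).mp (by exact_mod_cast h321)

theorem int_gcd_dvd_three {m : ℕ} (hm : 0 < m) (hm53 : m % 53 ≠ 13) :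
    Int.gcd (2 ^ (4 * m + 1) + 1) (1 + (-2) ^ (2 * m + 1) + (-2) ^ (m - 1)) ∣ 3 := by
  have h107 : ¬ 107 ∣ Int.gcd (2 ^ (4 * m + 1) + 1) (1 + (-2) ^ (2 * m + 1) + (-2) ^ (m - 1)) :=
    fun h => hm53 (mod_53_eq_13_of_107_dvd ((Int.natCast_dvd_natCast.mpr h).trans
      (Int.gcd_dvd_left _ _)))
  have hcop := Nat.coprime_comm.mp ((Nat.Prime.coprime_iff_not_dvd (by norm_num)).mpr h107)
  exact hcop.dvd_of_dvd_mul_right (int_gcd_dvd_321 hm)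

theorem zero_apn_11 (m : ℕ) (hm : 0 < m) (hm53 : m % 53 ≠ 13)
    (x : GaloisField 2 (4*m+1)) (hx0 : x ≠ 0) (hx1 : x ≠ 1) :
    (x + 1) ^ (2^(2*m+1)+2^(m-1)+1) + x ^ (2^(2*m+1)+2^(m-1)+1) + 1 ≠ 0 := by
  have := Fintype.ofFinite (GaloisField 2 (4 * m + 1))
  have hcard : Fintype.card (GaloisField 2 (4 * m + 1)) = 2 ^ (4 * m + 1) := by
    rw [← Nat.card_eq_fintype_card, GaloisField.card 2 _ (by omega)]
  exact add_one_pow_add_pow_add_one_ne_zero ⟨2 * m, by ring⟩ hcard (int_gcd_dvd_three hm hm53)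
    hx0 hx1
end

section
/- Let m be a positive integer, n = 5m, and d = 2^(3m) + 2^m + 1. Then the power function F(x) = x^d over F_{2^n} is 0-APN; that is, (x+1)^d + x^d + 1 = 0 has no solution x in F_{2^n} \ {0,1}. -/
/-!
Let `σ` be the Frobenius power `y ↦ y ^ 2 ^ m`, so that `σ ^ 5 = 1` on `𝔽_{2^{5m}}` and
`y ^ d = σ³y · σy · y`. In characteristic 2 the equation says that `e₂ + e₁` vanishes on the triple
`(σ³x, σx, x)`; adding its image under `σ²` (which sends the triple to `(x, σ³x, σ²x)`) factors as
`(σx + σ²x)(σ³x + x + 1) = 0`. Applying `σ⁴` to the first factor, or `σ³` to the second, gives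
`σx = x`, and then the equation collapses to `x² + x = 0`.
-/

section

variable {K : Type*} [CommRing K]

lemma RingHom.pow_apply_pow_apply (σ : K →+* K) (a b : ℕ) (x : K) :
    (σ ^ a) ((σ ^ b) x) = (σ ^ (a + b)) x := by
  rw [pow_add]; rfl

lemma RingHom.pow_apply_apply (σ : K →+* K) (a : ℕ) (x : K) : (σ ^ a) (σ x) = (σ ^ (a + 1)) x := by
  rw [pow_succ]; rfl

variable {σ : K →+* K} [CharP K 2]

lemma mul_eq_zero_of_pow_five_eq_one (hσ : σ ^ 5 = 1) {x : K}
    (h : (σ ^ 3) x * σ x + σ x * x + x * (σ ^ 3) x + (σ ^ 3) x + σ x + x = 0) :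
    (σ x + (σ ^ 2) x) * ((σ ^ 3) x + x + 1) = 0 := by
  have h₁ : (σ ^ 2) (σ x) = (σ ^ 3) x := σ.pow_apply_pow_apply 2 1 x
  have h₃ : (σ ^ 2) ((σ ^ 3) x) = x := by rw [σ.pow_apply_pow_apply, hσ]; rfl
  have h' := congrArg (⇑(σ ^ 2)) h
  simp only [map_add, map_mul, map_zero, h₁, h₃] at h'
  linear_combination h + h' - ((σ ^ 3) x + x + (σ ^ 3) x * x) * CharTwo.two_eq_zero (R := K)

lemma apply_eq_self_of_pow_five_eq_one [NoZeroDivisors K] (hσ : σ ^ 5 = 1) {x : K}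
    (h : (σ ^ 3) x * σ x + σ x * x + x * (σ ^ 3) x + (σ ^ 3) x + σ x + x = 0) :
    σ x = x := by
  have hσ₆ : (σ ^ 6) x = σ x := by rw [pow_succ, hσ, one_mul]
  rcases mul_eq_zero.mp (mul_eq_zero_of_pow_five_eq_one hσ h) with h₁₂ | h₃
  · have h₄ := congrArg (⇑(σ ^ 4)) (CharTwo.add_eq_zero.mp h₁₂)
    rwa [σ.pow_apply_apply, σ.pow_apply_pow_apply, hσ, hσ₆, eq_comm] at h₄
  · have h₃' : (σ ^ 3) x = x + 1 := CharTwo.add_eq_zero.mp (by rwa [add_assoc] at h₃)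
    have h₆ := congrArg (⇑(σ ^ 3)) h₃'
    rwa [σ.pow_apply_pow_apply, hσ₆, map_add, map_one, h₃', CharTwo.add_cancel_right] at h₆

theorem eq_zero_or_eq_one_of_pow_five_eq_one [NoZeroDivisors K] (hσ : σ ^ 5 = 1) {x : K}
    (h : (σ ^ 3) (x + 1) * σ (x + 1) * (x + 1) + (σ ^ 3) x * σ x * x + 1 = 0) :
    x = 0 ∨ x = 1 := by
  simp only [map_add, map_one] at h
  have hrel : (σ ^ 3) x * σ x + σ x * x + x * (σ ^ 3) x + (σ ^ 3) x + σ x + x = 0 := by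
    linear_combination h - ((σ ^ 3) x * σ x * x + 1) * CharTwo.two_eq_zero (R := K)
  have h₁ : σ x = x := apply_eq_self_of_pow_five_eq_one hσ hrel
  have h₃ : (σ ^ 3) x = x := by rw [RingHom.coe_pow]; exact Function.iterate_fixed h₁ 3
  rw [h₁, h₃] at hrel
  have hx : x * (x + 1) = 0 := by
    linear_combination hrel - (x * x + x) * CharTwo.two_eq_zero (R := K)
  exact (mul_eq_zero.mp hx).imp_right CharTwo.add_eq_zero.mp

end

lemma GaloisField.frobenius_pow_eq_one (p : ℕ) [Fact p.Prime] {n : ℕ} (hn : n ≠ 0) :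
    frobenius (GaloisField p n) p ^ n = 1 := by
  have : Fintype (GaloisField p n) := Fintype.ofFinite _
  exact FiniteField.frobenius_pow (by rw [← Nat.card_eq_fintype_card, GaloisField.card p n hn])

theorem zero_apn_12 (m : ℕ) (hm : 0 < m) 
    (x : GaloisField 2 (5*m)) (hx0 : x ≠ 0) (hx1 : x ≠ 1) :
    (x + 1) ^ (2^(3*m)+2^m+1) + x ^ (2^(3*m)+2^m+1) + 1 ≠ 0 := by
  set K := GaloisField 2 (5 * m)
  let σ := frobenius K 2 ^ m
  have hσ : σ ^ 5 = 1 := by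
    rw [← pow_mul, mul_comm m 5]
    exact GaloisField.frobenius_pow_eq_one 2 (by positivity)
  have hσpow (k : ℕ) (y : K) : (σ ^ k) y = y ^ 2 ^ (m * k) := by
    rw [← pow_mul, ← iterateFrobenius_eq_pow, iterateFrobenius_def]
  have hpow (y : K) : y ^ (2 ^ (3 * m) + 2 ^ m + 1) = (σ ^ 3) y * σ y * y := by
    rw [hσpow, ← pow_one σ, hσpow, mul_one, mul_comm m 3, pow_add, pow_add, pow_one]
  rw [hpow, hpow]
  intro h
  rcases eq_zero_or_eq_one_of_pow_five_eq_one hσ h with h₀ | h₁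
  exacts [hx0 h₀, hx1 h₁]
end

section
/- Let n = 2m+1 with m a positive integer, and let x ∈ F_{2^n} with y = x^(2^m). If y²x² + y²x + y² + x³ + x² + x = 0 and xy² + xy + x + y³ + y² + y = 0, then x(x+1)(x²+x+1)⁴ = 0; consequently x ∈ {0, 1}. -/
/-!
Eliminating `y` from the two equations (a resultant computation, valid in any ring of
characteristic two) leaves `x (x + 1) (x² + x + 1)⁴ = 0`. The last factor cannot vanish in
`𝔽_{2^n}` for odd `n`: a root of `x² + x + 1` is a cube root of unity, and since `2^n ≡ 2 (mod 3)`
the identity `x^(2^n) = x` turns into `x² = x`, which is incompatible with `x² + x + 1 = 0`.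
-/

theorem resultant_eq_zero_of_char_two {R : Type*} [CommRing R] [CharP R 2] (x y : R)
    (h1 : y ^ 2 * x ^ 2 + y ^ 2 * x + y ^ 2 + x ^ 3 + x ^ 2 + x = 0)
    (h2 : x * y ^ 2 + x * y + x + y ^ 3 + y ^ 2 + y = 0) :
    x * (x + 1) * (x ^ 2 + x + 1) ^ 4 = 0 := by
  have htwo : (2 : R) = 0 := CharP.ofNat_eq_zero R 2
  linear_combination (1 + y + y^2 + x*y + x^2*y^2 + x^3 + x^3*y + x^4*y^2 + x^5 + x^5*y + x^6
        + x^6*y + x^7) * h1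
    + (y + x*y + x^2 + x^3 + x^3*y + x^5 + x^5*y + x^6*y + x^7 + x^8) * h2
    - (y^2 + y^3 + y^4 + x*y + 2*x*y^2 + 2*x*y^3 + x*y^4 - 2*x^2 + 2*x^2*y + 2*x^2*y^2
        + 2*x^2*y^3 + x^2*y^4 - 6*x^3 + 2*x^3*y + 3*x^3*y^2 + 2*x^3*y^3 + x^3*y^4 - 12*x^4
        + 2*x^4*y + 2*x^4*y^2 + x^4*y^3 + x^4*y^4 - 17*x^5 + x^5*y + 3*x^5*y^2 + 2*x^5*y^3
        + x^5*y^4 - 16*x^6 + 2*x^6*y + 3*x^6*y^2 + 2*x^6*y^3 + x^6*y^4 - 12*x^7 + 2*x^7*y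
        + 3*x^7*y^2 + 2*x^7*y^3 - 5*x^8 + 2*x^8*y + 2*x^8*y^2 + x^8*y^3 - x^9 + x^9*y
        + x^9*y^2) * htwo

theorem two_pow_mod_three_of_odd {n : ℕ} (hn : Odd n) : 2 ^ n % 3 = 2 := by
  obtain ⟨k, rfl⟩ := hn
  rw [pow_succ, pow_mul, Nat.mul_mod, Nat.pow_mod]
  norm_num

theorem sq_add_self_add_one_ne_zero {K : Type*} [Field K] [Fintype K] {n : ℕ}
    (hcard : Fintype.card K = 2 ^ n) (hn : Odd n) (x : K) : x ^ 2 + x + 1 ≠ 0 := by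
  intro h
  have htwo : (2 : K) = 0 := by
    have hq : ((2 ^ n : ℕ) : K) = 0 := hcard ▸ FiniteField.cast_card_eq_zero K
    exact pow_eq_zero_iff hn.pos.ne' |>.mp (by exact_mod_cast hq)
  have hcube : x ^ 3 = 1 := by linear_combination (x - 1) * h
  have hidem : x ^ 2 = x := by
    rw [← two_pow_mod_three_of_odd hn, ← pow_eq_pow_mod _ hcube, ← hcard, FiniteField.pow_card]
  exact one_ne_zero (by linear_combination h - hidem - x * htwo : (1 : K) = 0)

theorem resultant_system_2m1_general (m : ℕ)
    (x y : GaloisField 2 (2 * m + 1))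
    (h1 : y ^ 2 * x ^ 2 + y ^ 2 * x + y ^ 2 + x ^ 3 + x ^ 2 + x = 0)
    (h2 : x * y ^ 2 + x * y + x + y ^ 3 + y ^ 2 + y = 0) :
    x * (x + 1) * (x ^ 2 + x + 1) ^ 4 = 0 ∧ (x = 0 ∨ x = 1) := by
  have hres := resultant_eq_zero_of_char_two x y h1 h2
  refine ⟨hres, ?_⟩
  let _ : Fintype (GaloisField 2 (2 * m + 1)) := Fintype.ofFinite _
  have hcard : Fintype.card (GaloisField 2 (2 * m + 1)) = 2 ^ (2 * m + 1) := by
    rw [← Nat.card_eq_fintype_card, GaloisField.card 2 _ (by omega)]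
  rcases mul_eq_zero.mp hres with hlin | hquad
  · rcases mul_eq_zero.mp hlin with hx | hx
    · exact Or.inl hx
    · exact Or.inr (CharTwo.add_eq_zero.mp hx)
  · exact absurd (pow_eq_zero_iff four_ne_zero |>.mp hquad)
      (sq_add_self_add_one_ne_zero hcard (odd_two_mul_add_one m) x)

theorem resultant_system_2m1 (m : ℕ) (hm : 0 < m)
    (x y : GaloisField 2 (2 * m + 1)) (hy : y = x ^ (2 ^ m))
    (h1 : y ^ 2 * x ^ 2 + y ^ 2 * x + y ^ 2 + x ^ 3 + x ^ 2 + x = 0)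
    (h2 : x * y ^ 2 + x * y + x + y ^ 3 + y ^ 2 + y = 0) :
    x * (x + 1) * (x ^ 2 + x + 1) ^ 4 = 0 ∧ (x = 0 ∨ x = 1) :=
  resultant_system_2m1_general m x y h1 h2
end

section
/- Let n = 5m and let x ∈ F_{2^n} \ {0,1} with y = x^(2^m), z = y^(2^m), u = z^(2^m), v = u^(2^m) (so v^(2^m) = x). Then the system uy+ux+u+yx+y+x = 0, vz+vy+v+zy+z+y = 0, xu+xz+x+uz+u+z = 0, yv+yu+y+vu+v+u = 0, zx+zv+z+xv+x+v = 0 has no solution. -/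
/-!
Write `σ` for the ring endomorphism `a ↦ a ^ 2 ^ m`, so that `x, y, z, u, v` is a `σ`-cycle of
length five. Subtracting the fifth equation from the third gives `(u - v) * (x + z + 1) = 0`.
If `u = v`, then `u` is fixed by `σ`, so the whole cycle collapses to `x` and the first equation
becomes `x ^ 2 = x`. If `x + z + 1 = 0`, applying `σ` four times gives the same relation for
every pair at distance two in the cycle; adding the five relations yields `5 = 0`, i.e. `1 = 0`
in characteristic two.
-/

theorem GaloisField.pow_prime_pow_eq_self (p n : ℕ) [Fact p.Prime] (a : GaloisField p n) :
    a ^ p ^ n = a := by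
  rcases eq_or_ne n 0 with rfl | hn
  · rw [pow_zero, pow_one]
  · have : Fintype (GaloisField p n) := Fintype.ofFinite _
    have hcard : Fintype.card (GaloisField p n) = p ^ n := by
      rw [← Nat.card_eq_fintype_card, GaloisField.card p n hn]
    simpa only [hcard] using FiniteField.pow_card a

namespace CharTwo

variable {R : Type*} [CommRing R] [CharP R 2] (σ : R →+* R) {x y z u v : R}

theorem add_add_one_ne_zero_of_cycle [Nontrivial R]
    (hy : σ x = y) (hz : σ y = z) (hu : σ z = u) (hv : σ u = v) (hx : σ v = x) :
    x + z + 1 ≠ 0 := by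
  intro hxz
  have step : ∀ a b : R, a + b + 1 = 0 → σ a + σ b + 1 = 0 := fun a b h => by
    rw [← map_one σ, ← map_add, ← map_add, h, map_zero]
  have hyu : y + u + 1 = 0 := by simpa only [hy, hu] using step _ _ hxz
  have hzv : z + v + 1 = 0 := by simpa only [hz, hv] using step _ _ hyu
  have hux : u + x + 1 = 0 := by simpa only [hu, hx] using step _ _ hzv
  have hvy : v + y + 1 = 0 := by simpa only [hv, hy] using step _ _ hux
  exact one_ne_zero <| by
    linear_combination hxz + hyu + hzv + hux + hvy - (x + y + z + u + v + 2) * two_eq_zero (R := R)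

theorem eq_zero_or_eq_one_of_cycle [IsDomain R]
    (hy : σ x = y) (hz : σ y = z) (hu : σ z = u) (hv : σ u = v) (hx : σ v = x)
    (h1 : u * y + u * x + u + y * x + y + x = 0)
    (h3 : x * u + x * z + x + u * z + u + z = 0)
    (h5 : z * x + z * v + z + x * v + x + v = 0) :
    x = 0 ∨ x = 1 := by
  have key : (u - v) * (x + z + 1) = 0 := by linear_combination h3 - h5
  rcases mul_eq_zero.mp key with hsub | hxz
  · have huv : u = v := sub_eq_zero.mp hsub
    have hxu : x = u := by rw [← hx, ← huv, hv, huv]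
    have hyu : y = u := by rw [← hy, hxu, hv, huv]
    rw [hxu, hyu] at h1
    rw [hxu]
    exact IsIdempotentElem.iff_eq_zero_or_one.mp <| show u * u = u by
      linear_combination h1 - (u * u + 2 * u) * two_eq_zero (R := R)
  · exact absurd hxz (add_add_one_ne_zero_of_cycle σ hy hz hu hv hx)

end CharTwo

theorem no_solution_system_5m_general (m : ℕ)
    (x y z u v : GaloisField 2 (5 * m))
    (hx0 : x ≠ 0) (hx1 : x ≠ 1)
    (hy : y = x ^ (2 ^ m)) (hz : z = y ^ (2 ^ m))
    (hu : u = z ^ (2 ^ m)) (hv : v = u ^ (2 ^ m))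
    (h1 : u * y + u * x + u + y * x + y + x = 0)
    (h3 : x * u + x * z + x + u * z + u + z = 0)
    (h5 : z * x + z * v + z + x * v + x + v = 0) :
    False := by
  let σ := iterateFrobenius (GaloisField 2 (5 * m)) 2 m
  have hx : σ v = x := by
    rw [iterateFrobenius_def, hv, hu, hz, hy, ← pow_mul, ← pow_mul, ← pow_mul, ← pow_mul,
      ← pow_add, ← pow_add, ← pow_add, ← pow_add, show m + (m + (m + (m + m))) = 5 * m by ring]
    exact GaloisField.pow_prime_pow_eq_self 2 (5 * m) x
  rcases CharTwo.eq_zero_or_eq_one_of_cycle σ hy.symm hz.symm hu.symm hv.symm hx h1 h3 h5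
    with h | h
  exacts [hx0 h, hx1 h]

theorem no_solution_system_5m (m : ℕ) (hm : 0 < m)
    (x y z u v : GaloisField 2 (5 * m))
    (hx0 : x ≠ 0) (hx1 : x ≠ 1)
    (hy : y = x ^ (2 ^ m)) (hz : z = y ^ (2 ^ m))
    (hu : u = z ^ (2 ^ m)) (hv : v = u ^ (2 ^ m))
    (h1 : u * y + u * x + u + y * x + y + x = 0)
    (h2 : v * z + v * y + v + z * y + z + y = 0)
    (h3 : x * u + x * z + x + u * z + u + z = 0)
    (h4 : y * v + y * u + y + v * u + v + u = 0)
    (h5 : z * x + z * v + z + x * v + x + v = 0) :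
    False :=
  no_solution_system_5m_general m x y z u v hx0 hx1 hy hz hu hv h1 h3 h5
end
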